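/- arXiv:1802.09199 — 10 statements merged into one kernel-verified Lean document; each statement's English description precedes it below -/
import Mathlib

section
/- Let (Alo, Ahi) be an interval m×n matrix, (blo, bhi) an interval vector in ℝ^m, and (𝒜, β) a quantifier pattern. For every x ∈ ℝ^n: x is an AE-solution of the interval-quantifier system of equations A x = b (all rows are equalities) if and only if for every row i one has L_i(x) ≥ r_i and U_i(x) ≤ s_i. -/
open Finset

/-- A real matrix `A` lies in the interval matrix `(Alo, Ahi)`. -/
def memIM {m n : ℕ} (Alo Ahi A : Matrix (Fin m) (Fin n) ℝ) : Prop :=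
  ∀ i j, Alo i j ≤ A i j ∧ A i j ≤ Ahi i j

/-- A real vector `b` lies in the interval vector `(blo, bhi)`. -/
def memIV {m : ℕ} (blo bhi b : Fin m → ℝ) : Prop :=
  ∀ i, blo i ≤ b i ∧ b i ≤ bhi i

/-- `x` is an AE-solution of the interval-quantifier system `A x rel b`.
The quantifier pattern is given by `qA : Fin m → Fin n → Bool` and
`qb : Fin m → Bool`, where `true` stands for the label "∀" and `false`
for the label "∃". -/
def AESol {m n : ℕ} (Alo Ahi : Matrix (Fin m) (Fin n) ℝ) (blo bhi : Fin m → ℝ)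
    (qA : Fin m → Fin n → Bool) (qb : Fin m → Bool)
    (rel : Fin m → ℝ → ℝ → Prop) (x : Fin n → ℝ) : Prop :=
  ∀ A' b', memIM Alo Ahi A' → memIV blo bhi b' →
    ∃ A b, memIM Alo Ahi A ∧ memIV blo bhi b ∧
      (∀ i j, qA i j = true → A i j = A' i j) ∧
      (∀ i, qb i = true → b i = b' i) ∧
      ∀ i, rel i (∑ j, A i j * x j) (b i)

/-
The rows decouple, and the right-hand side of a row is one more interval coefficient, so it
suffices to treat one homogeneous row `∑ a_j y_j = 0`. For a fixed choice of the universally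
quantified coefficients, the existentially quantified ones range over a box, whose image under
`a ↦ ∑ a_j y_j` is connected and hence an interval with endpoints obtained by taking each
`a_j y_j` extremal. Solvability for every adversary then means that the worst adversary, which
makes each universal term extremal in the other direction, still leaves `0` in that interval.
-/

section Entry

variable {lo hi t : ℝ}

lemma min_mul_le_mul_of_mem_Icc (ht : t ∈ Set.Icc lo hi) (x : ℝ) :
    min (lo * x) (hi * x) ≤ t * x := by
  rcases le_total 0 x with hx | hx
  · exact (min_le_left _ _).trans (mul_le_mul_of_nonneg_right ht.1 hx)
  · exact (min_le_right _ _).trans (mul_le_mul_of_nonpos_right ht.2 hx)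

lemma mul_le_max_mul_of_mem_Icc (ht : t ∈ Set.Icc lo hi) (x : ℝ) :
    t * x ≤ max (lo * x) (hi * x) := by
  rcases le_total 0 x with hx | hx
  · exact (mul_le_mul_of_nonneg_right ht.2 hx).trans (le_max_right _ _)
  · exact (mul_le_mul_of_nonpos_right ht.1 hx).trans (le_max_left _ _)

lemma exists_mem_Icc_mul_eq_min (h : lo ≤ hi) (x : ℝ) :
    ∃ t ∈ Set.Icc lo hi, t * x = min (lo * x) (hi * x) := by
  rcases min_choice (lo * x) (hi * x) with hmin | hmin
  exacts [⟨lo, ⟨le_rfl, h⟩, hmin.symm⟩, ⟨hi, ⟨h, le_rfl⟩, hmin.symm⟩]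

lemma exists_mem_Icc_mul_eq_max (h : lo ≤ hi) (x : ℝ) :
    ∃ t ∈ Set.Icc lo hi, t * x = max (lo * x) (hi * x) := by
  rcases max_choice (lo * x) (hi * x) with hmax | hmax
  exacts [⟨lo, ⟨le_rfl, h⟩, hmax.symm⟩, ⟨hi, ⟨h, le_rfl⟩, hmax.symm⟩]

end Entry

section Row

variable {ι : Type*} [Fintype ι] {lo hi : ι → ℝ} {q : ι → Bool} {y : ι → ℝ}

/-- The paper's `L_i` (and `aeUpper` its `U_i`) for a single row with coefficient bounds
`lo`, `hi` and quantifiers `q`. -/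
def aeLower (lo hi : ι → ℝ) (q : ι → Bool) (y : ι → ℝ) : ℝ :=
  ∑ j, if q j then min (lo j * y j) (hi j * y j) else max (lo j * y j) (hi j * y j)

def aeUpper (lo hi : ι → ℝ) (q : ι → Bool) (y : ι → ℝ) : ℝ :=
  ∑ j, if q j then max (lo j * y j) (hi j * y j) else min (lo j * y j) (hi j * y j)

lemma sum_mul_le_aeLower {a : ι → ℝ} (ha : ∀ j, a j ∈ Set.Icc (lo j) (hi j))
    (hmin : ∀ j, q j = true → a j * y j = min (lo j * y j) (hi j * y j)) :
    ∑ j, a j * y j ≤ aeLower lo hi q y := by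
  refine sum_le_sum fun j _ => ?_
  split_ifs with hq
  exacts [(hmin j hq).le, mul_le_max_mul_of_mem_Icc (ha j) _]

lemma aeUpper_le_sum_mul {a : ι → ℝ} (ha : ∀ j, a j ∈ Set.Icc (lo j) (hi j))
    (hmax : ∀ j, q j = true → a j * y j = max (lo j * y j) (hi j * y j)) :
    aeUpper lo hi q y ≤ ∑ j, a j * y j := by
  refine sum_le_sum fun j _ => ?_
  split_ifs with hq
  exacts [(hmax j hq).ge, min_mul_le_mul_of_mem_Icc (ha j) _]

/-- The completions of `a'` form a box, hence a connected set, on which `a ↦ ∑ a j * y j` is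
continuous; the two extreme completions show that its range reaches past both bounds. -/
lemma exists_completion_sum_mul_eq (hlh : ∀ j, lo j ≤ hi j) {a' : ι → ℝ}
    (ha' : ∀ j, a' j ∈ Set.Icc (lo j) (hi j)) {t : ℝ} (hU : aeUpper lo hi q y ≤ t)
    (hL : t ≤ aeLower lo hi q y) :
    ∃ a : ι → ℝ, (∀ j, a j ∈ Set.Icc (lo j) (hi j)) ∧ (∀ j, q j = true → a j = a' j) ∧
      ∑ j, a j * y j = t := by
  set S : Set (ι → ℝ) := Set.univ.pi fun j => if q j then {a' j} else Set.Icc (lo j) (hi j)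
  have hS : IsPreconnected S := by
    refine (convex_pi fun j _ => ?_).isPreconnected
    split_ifs
    exacts [convex_singleton _, convex_Icc _ _]
  choose amin hamin using fun j => exists_mem_Icc_mul_eq_min (hlh j) (y j)
  choose amax hamax using fun j => exists_mem_Icc_mul_eq_max (hlh j) (y j)
  have hmem : ∀ b : ι → ℝ, (∀ j, b j ∈ Set.Icc (lo j) (hi j)) →
      (fun j => if q j then a' j else b j) ∈ S := by
    intro b hb j _
    by_cases hq : q j <;> simp [hq, hb j]
  have hlow : ∑ j, (if q j then a' j else amin j) * y j ≤ t :=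
    hU.trans' <| sum_le_sum fun j _ => by
      cases q j <;> simp [(hamin j).2, mul_le_max_mul_of_mem_Icc (ha' j)]
  have hhigh : t ≤ ∑ j, (if q j then a' j else amax j) * y j :=
    hL.trans <| sum_le_sum fun j _ => by
      cases q j <;> simp [(hamax j).2, min_mul_le_mul_of_mem_Icc (ha' j)]
  obtain ⟨a, haS, hat⟩ := hS.intermediate_value (hmem amin fun j => (hamin j).1)
    (hmem amax fun j => (hamax j).1) (f := fun a => ∑ j, a j * y j) (by fun_prop) ⟨hlow, hhigh⟩
  refine ⟨a, fun j => ?_, fun j hq => ?_, hat⟩ <;> have := haS j (Set.mem_univ j)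
  · cases hq : q j <;> simp_all
  · simpa [hq] using this

def RowAESolvable (lo hi : ι → ℝ) (q : ι → Bool) (y : ι → ℝ) (t : ℝ) : Prop :=
  ∀ a' : ι → ℝ, (∀ j, a' j ∈ Set.Icc (lo j) (hi j)) →
    ∃ a : ι → ℝ, (∀ j, a j ∈ Set.Icc (lo j) (hi j)) ∧ (∀ j, q j = true → a j = a' j) ∧
      ∑ j, a j * y j = t

theorem rowAESolvable_iff (hlh : ∀ j, lo j ≤ hi j) {t : ℝ} :
    RowAESolvable lo hi q y t ↔ t ≤ aeLower lo hi q y ∧ aeUpper lo hi q y ≤ t := by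
  refine ⟨fun h => ⟨?_, ?_⟩, fun ⟨hL, hU⟩ a' ha' => exists_completion_sum_mul_eq hlh ha' hU hL⟩
  · choose amin hamin using fun j => exists_mem_Icc_mul_eq_min (hlh j) (y j)
    obtain ⟨a, ha, hagree, rfl⟩ := h amin fun j => (hamin j).1
    exact sum_mul_le_aeLower ha fun j hq => by rw [hagree j hq, (hamin j).2]
  · choose amax hamax using fun j => exists_mem_Icc_mul_eq_max (hlh j) (y j)
    obtain ⟨a, ha, hagree, rfl⟩ := h amax fun j => (hamax j).1
    exact aeUpper_le_sum_mul ha fun j hq => by rw [hagree j hq, (hamax j).2]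

end Row

/-- The right-hand side `b i` is treated as one more coefficient of row `i`, multiplying an
extra unknown equal to `-1`. -/
theorem aeSol_eq_iff_forall_rowAESolvable {m n : ℕ} {Alo Ahi : Matrix (Fin m) (Fin n) ℝ}
    {blo bhi : Fin m → ℝ} (hA : ∀ i j, Alo i j ≤ Ahi i j) (hb : ∀ i, blo i ≤ bhi i)
    (qA : Fin m → Fin n → Bool) (qb : Fin m → Bool) (x : Fin n → ℝ) :
    AESol Alo Ahi blo bhi qA qb (fun _ a b => a = b) x ↔
      ∀ i, RowAESolvable (Option.elim' (blo i) (Alo i)) (Option.elim' (bhi i) (Ahi i))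
        (Option.elim' (qb i) (qA i)) (Option.elim' (-1) x) 0 := by
  constructor
  · intro h i c' hc'
    obtain ⟨A, b, hAm, hbm, hAq, hbq, heq⟩ :=
      h (Alo.updateRow i fun j => c' (some j)) (Function.update blo i (c' none))
        (fun k j => by
          by_cases hk : k = i
          · subst hk; simpa using hc' (some j)
          · simp [hk, hA k j])
        (fun k => by
          by_cases hk : k = i
          · subst hk; simpa using hc' none
          · simp [hk, hb k])
    refine ⟨Option.elim' (b i) (A i), ?_, ?_, ?_⟩
    · rintro (_ | j)
      exacts [hbm i, hAm i j]
    · rintro (_ | j) hq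
      · simpa using hbq i hq
      · simpa using hAq i j hq
    · simp [Fintype.sum_option, heq i]
  · intro h A' b' hA' hb'
    choose c hc hcq hcsum using fun i => h i (Option.elim' (b' i) (A' i)) <| by
      rintro (_ | j)
      exacts [hb' i, hA' i j]
    refine ⟨fun i j => c i (some j), fun i => c i none, fun i j => hc i (some j),
      fun i => hc i none, fun i j => hcq i (some j), fun i => hcq i none, fun i => ?_⟩
    have := hcsum i
    simp only [Fintype.sum_option, Option.elim'] at this
    linarith

theorem stmt0 (m n : ℕ) (Alo Ahi : Matrix (Fin m) (Fin n) ℝ) (blo bhi : Fin m → ℝ)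
    (hA : ∀ i j, Alo i j ≤ Ahi i j) (hb : ∀ i, blo i ≤ bhi i)
    (qA : Fin m → Fin n → Bool) (qb : Fin m → Bool) (x : Fin n → ℝ) :
    AESol Alo Ahi blo bhi qA qb (fun _ a b => a = b) x ↔
    ∀ i,
      (∑ j, if qA i j then min (Alo i j * x j) (Ahi i j * x j)
              else max (Alo i j * x j) (Ahi i j * x j)) ≥ (if qb i then bhi i else blo i) ∧
      (∑ j, if qA i j then max (Alo i j * x j) (Ahi i j * x j)
              else min (Alo i j * x j) (Ahi i j * x j)) ≤ (if qb i then blo i else bhi i) := by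
  rw [aeSol_eq_iff_forall_rowAESolvable hA hb]
  refine forall_congr' fun i => ?_
  have hlh : ∀ o, Option.elim' (blo i) (Alo i) o ≤ Option.elim' (bhi i) (Ahi i) o := by
    rintro (_ | j)
    exacts [hb i, hA i j]
  rw [rowAESolvable_iff hlh, aeLower, aeUpper, Fintype.sum_option, Fintype.sum_option]
  cases qb i <;> simp [hb i] <;> rfl
end

section
/- For interval systems of linear inequalities A x ≥ b, the order of the quantifiers does not matter: for every x ∈ ℝ^n, x is an AE-solution of A x ≥ b (universal parameters quantified first) if and only if x is an EA-solution of A x ≥ b (existential parameters quantified first), for the same interval data (Alo, Ahi, blo, bhi) and the same quantifier pattern (𝒜, β). -/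
/-!
Every row `∑ⱼ Aᵢⱼ xⱼ ≥ bᵢ` is monotone in each parameter separately: it gets harder as `bᵢ`
grows and as `Aᵢⱼ` moves towards `Alo` (if `xⱼ ≥ 0`) or `Ahi` (if `xⱼ < 0`). So the universal
parameters have a single worst case, namely `bhi` and the matrix picking the bad endpoint in each
column. The existential response to that worst case, given by the AE-property, already works
against every universal choice, which is the EA-property. The converse holds for any relations,
by combining the fixed existential choice with the given universal one.
-/

open Finset

/-- `x` is an EA-solution: the existentially quantified parameters are chosen
first, then for every choice of the universally quantified parameters the
combined matrix/vector must satisfy the relations. -/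
def EASol {m n : ℕ} (Alo Ahi : Matrix (Fin m) (Fin n) ℝ) (blo bhi : Fin m → ℝ)
    (qA : Fin m → Fin n → Bool) (qb : Fin m → Bool)
    (rel : Fin m → ℝ → ℝ → Prop) (x : Fin n → ℝ) : Prop :=
  ∃ A b, memIM Alo Ahi A ∧ memIV blo bhi b ∧
    ∀ A' b', memIM Alo Ahi A' → memIV blo bhi b' →
      ∀ i, rel i (∑ j, (if qA i j then A' i j else A i j) * x j)
               (if qb i then b' i else b i)

section IntervalMembership

variable {m n : ℕ}

theorem memIM_ite {Alo Ahi A A' : Matrix (Fin m) (Fin n) ℝ} (qA : Fin m → Fin n → Bool)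
    (hA' : memIM Alo Ahi A') (hA : memIM Alo Ahi A) :
    memIM Alo Ahi (fun i j => if qA i j then A' i j else A i j) := by
  intro i j
  dsimp only
  split
  exacts [hA' i j, hA i j]

theorem memIV_ite {blo bhi b b' : Fin m → ℝ} (qb : Fin m → Bool)
    (hb' : memIV blo bhi b') (hb : memIV blo bhi b) :
    memIV blo bhi (fun i => if qb i then b' i else b i) := by
  intro i
  dsimp only
  split
  exacts [hb' i, hb i]

theorem memIV_upper {blo bhi : Fin m → ℝ} (hb : ∀ i, blo i ≤ bhi i) : memIV blo bhi bhi :=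
  fun i => ⟨hb i, le_rfl⟩

end IntervalMembership

theorem EASol.aeSol {m n : ℕ} {Alo Ahi : Matrix (Fin m) (Fin n) ℝ} {blo bhi : Fin m → ℝ}
    {qA : Fin m → Fin n → Bool} {qb : Fin m → Bool} {rel : Fin m → ℝ → ℝ → Prop}
    {x : Fin n → ℝ} (h : EASol Alo Ahi blo bhi qA qb rel x) :
    AESol Alo Ahi blo bhi qA qb rel x := by
  obtain ⟨A, b, hA, hb, hsol⟩ := h
  intro A' b' hA' hb'
  exact ⟨_, _, memIM_ite qA hA' hA, memIV_ite qb hb' hb, fun i j hq => if_pos hq,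
    fun i hq => if_pos hq, hsol A' b' hA' hb'⟩

section WorstCase

variable {m n : ℕ} {Alo Ahi : Matrix (Fin m) (Fin n) ℝ}

/-- The matrix of the interval `(Alo, Ahi)` that minimises every row product with `x`. -/
noncomputable def worstCaseMatrix (Alo Ahi : Matrix (Fin m) (Fin n) ℝ) (x : Fin n → ℝ) :
    Matrix (Fin m) (Fin n) ℝ :=
  fun i j => if 0 ≤ x j then Alo i j else Ahi i j

theorem memIM_worstCaseMatrix (hA : ∀ i j, Alo i j ≤ Ahi i j) (x : Fin n → ℝ) :
    memIM Alo Ahi (worstCaseMatrix Alo Ahi x) := by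
  intro i j
  unfold worstCaseMatrix
  split
  exacts [⟨le_rfl, hA i j⟩, ⟨hA i j, le_rfl⟩]

theorem worstCaseMatrix_mul_le {A : Matrix (Fin m) (Fin n) ℝ} (hA : memIM Alo Ahi A)
    (x : Fin n → ℝ) (i : Fin m) (j : Fin n) :
    worstCaseMatrix Alo Ahi x i j * x j ≤ A i j * x j := by
  unfold worstCaseMatrix
  split
  case isTrue hx => exact mul_le_mul_of_nonneg_right (hA i j).1 hx
  case isFalse hx => exact mul_le_mul_of_nonpos_right (hA i j).2 (le_of_not_ge hx)

end WorstCase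

theorem AESol.eaSol_ge {m n : ℕ} {Alo Ahi : Matrix (Fin m) (Fin n) ℝ} {blo bhi : Fin m → ℝ}
    (hA : ∀ i j, Alo i j ≤ Ahi i j) (hb : ∀ i, blo i ≤ bhi i)
    {qA : Fin m → Fin n → Bool} {qb : Fin m → Bool} {x : Fin n → ℝ}
    (h : AESol Alo Ahi blo bhi qA qb (fun _ a b => a ≥ b) x) :
    EASol Alo Ahi blo bhi qA qb (fun _ a b => a ≥ b) x := by
  obtain ⟨A, b, hAmem, hbmem, hAworst, hbworst, hsol⟩ :=
    h _ _ (memIM_worstCaseMatrix hA x) (memIV_upper hb)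
  refine ⟨A, b, hAmem, hbmem, fun A' b' hA' hb' i => ?_⟩
  have hlhs : ∑ j, A i j * x j ≤ ∑ j, (if qA i j then A' i j else A i j) * x j := by
    refine sum_le_sum fun j _ => ?_
    split
    case isTrue hq => exact hAworst i j hq ▸ worstCaseMatrix_mul_le hA' x i j
    case isFalse => exact le_rfl
  have hrhs : (if qb i then b' i else b i) ≤ b i := by
    split
    case isTrue hq => exact hbworst i hq ▸ (hb' i).2
    case isFalse => exact le_rfl
  exact hrhs.trans ((hsol i).trans hlhs)

theorem stmt3 (m n : ℕ) (Alo Ahi : Matrix (Fin m) (Fin n) ℝ) (blo bhi : Fin m → ℝ)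
    (hA : ∀ i j, Alo i j ≤ Ahi i j) (hb : ∀ i, blo i ≤ bhi i)
    (qA : Fin m → Fin n → Bool) (qb : Fin m → Bool) (x : Fin n → ℝ) :
    AESol Alo Ahi blo bhi qA qb (fun _ a b => a ≥ b) x ↔
    EASol Alo Ahi blo bhi qA qb (fun _ a b => a ≥ b) x :=
  ⟨AESol.eaSol_ge hA hb, EASol.aeSol⟩
end

section
/- Let (Alo, Ahi) be an interval m×n matrix, (blo, bhi) an interval vector in ℝ^m, (𝒜, β) a quantifier pattern, and σ a relation vector assigning to each row i a relation σ_i ∈ {=, ≥, ≤}. For every x ∈ ℝ^n: x is an AE-solution of the mixed interval-quantifier system A x σ b if and only if for every row i the following holds: if σ_i is '=' then L_i(x) ≥ r_i and U_i(x) ≤ s_i; if σ_i is '≥' then L_i(x) ≥ r_i; if σ_i is '≤' then U_i(x) ≤ s_i. -/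
open Finset

/-- The three possible binary relations in a row of the system. -/
inductive IRel where
  | eq : IRel
  | ge : IRel
  | le : IRel

/-- Interpretation of an `IRel` as a relation on ℝ. -/
def IRel.holds : IRel → ℝ → ℝ → Prop
  | .eq, a, b => a = b
  | .ge, a, b => a ≥ b
  | .le, a, b => a ≤ b

/-! Everything decouples row by row. Once the ∀-entries of row `i` are fixed, the ∃-entries range
over a box, which is connected, so `∑ j, A i j * x j` sweeps out exactly the interval between the
sums in which each free term `A i j * x j` is minimised, resp. maximised; `b i` ranges over an
interval as well. The row is satisfiable iff the two intervals are related as `σ i` demands, a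
comparison of endpoints. The worst case over the ∀-entries is the corner matrix minimising
(resp. maximising) every `A i j * x j` together with `b = bhi` (resp. `blo`), which turns that
comparison into `L_i(x) ≥ r_i` and `U_i(x) ≤ s_i`. -/

open Set

lemma mul_mem_Icc_min_max {lo hi a : ℝ} (ha : a ∈ Icc lo hi) (x : ℝ) :
    a * x ∈ Icc (min (lo * x) (hi * x)) (max (lo * x) (hi * x)) := by
  have := mem_image_of_mem (· * x) (Icc_subset_uIcc ha)
  rwa [image_mul_const_uIcc] at this

noncomputable def argminMul (lo hi x : ℝ) : ℝ := if lo * x ≤ hi * x then lo else hi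

noncomputable def argmaxMul (lo hi x : ℝ) : ℝ := if lo * x ≤ hi * x then hi else lo

lemma argminMul_mul (lo hi x : ℝ) : argminMul lo hi x * x = min (lo * x) (hi * x) := by
  rw [argminMul, ite_mul, min_def]

lemma argmaxMul_mul (lo hi x : ℝ) : argmaxMul lo hi x * x = max (lo * x) (hi * x) := by
  rw [argmaxMul, ite_mul, max_def]

lemma argminMul_mem_Icc {lo hi : ℝ} (h : lo ≤ hi) (x : ℝ) : argminMul lo hi x ∈ Icc lo hi := by
  unfold argminMul; split_ifs <;> simp [h]

lemma argmaxMul_mem_Icc {lo hi : ℝ} (h : lo ≤ hi) (x : ℝ) : argmaxMul lo hi x ∈ Icc lo hi := by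
  unfold argmaxMul; split_ifs <;> simp [h]

theorem image_sum_mul_pi_Icc {ι : Type*} [Fintype ι] {lo hi : ι → ℝ} (h : ∀ j, lo j ≤ hi j)
    (x : ι → ℝ) :
    (fun a : ι → ℝ => ∑ j, a j * x j) '' pi univ (fun j => Icc (lo j) (hi j)) =
      Icc (∑ j, min (lo j * x j) (hi j * x j)) (∑ j, max (lo j * x j) (hi j * x j)) := by
  refine subset_antisymm ?_ ?_
  · rintro _ ⟨a, ha, rfl⟩
    exact ⟨Finset.sum_le_sum fun j _ => (mul_mem_Icc_min_max (ha j trivial) (x j)).1,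
      Finset.sum_le_sum fun j _ => (mul_mem_Icc_min_max (ha j trivial) (x j)).2⟩
  · have hconn := (isPreconnected_univ_pi fun j => isPreconnected_Icc (a := lo j) (b := hi j)).image
      _ (by fun_prop : Continuous fun a : ι → ℝ => ∑ j, a j * x j).continuousOn
    refine hconn.Icc_subset ⟨fun j => argminMul (lo j) (hi j) (x j), ?_, ?_⟩
      ⟨fun j => argmaxMul (lo j) (hi j) (x j), ?_, ?_⟩
    · exact fun j _ => argminMul_mem_Icc (h j) (x j)
    · simp only [argminMul_mul]
    · exact fun j _ => argmaxMul_mem_Icc (h j) (x j)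
    · simp only [argmaxMul_mul]

/-- The row condition of the theorem in terms of `L_i(x)`, `U_i(x)`, `r_i`, `s_i`. -/
def IRel.Feasible : IRel → ℝ → ℝ → ℝ → ℝ → Prop
  | .eq, L, U, r, s => L ≥ r ∧ U ≤ s
  | .ge, L, _, r, _ => L ≥ r
  | .le, _, U, _, s => U ≤ s

namespace IRel

variable {ρ : IRel} {L L' U U' r r' s s' : ℝ}

theorem Feasible.mono (h : ρ.Feasible L U r s) (hL : L ≤ L') (hU : U' ≤ U) (hr : r' ≤ r)
    (hs : s ≤ s') : ρ.Feasible L' U' r' s' := by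
  cases ρ
  exacts [⟨hr.trans (h.1.trans hL), (hU.trans h.2).trans hs⟩, hr.trans (h.trans hL),
    (hU.trans h).trans hs]

theorem Feasible.combine (h : ρ.Feasible L U' r s') (h' : ρ.Feasible L' U r' s) :
    ρ.Feasible L U r s := by
  cases ρ
  exacts [⟨h.1, h'.2⟩, h, h']

theorem exists_mem_Icc_holds_iff (ρ : IRel) {lo hi p q : ℝ} (hlh : lo ≤ hi) (hpq : p ≤ q) :
    (∃ v ∈ Icc lo hi, ∃ β ∈ Icc p q, ρ.holds v β) ↔ ρ.Feasible hi lo p q := by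
  cases ρ <;> simp only [holds, Feasible]
  · constructor
    · rintro ⟨v, hv, β, hβ, rfl⟩
      exact ⟨hβ.1.trans hv.2, hv.1.trans hβ.2⟩
    · rintro ⟨hp, hq⟩
      exact ⟨max lo p, ⟨le_max_left _ _, max_le hlh hp⟩, _, ⟨le_max_right _ _, max_le hq hpq⟩, rfl⟩
  · constructor
    · rintro ⟨v, hv, β, hβ, h⟩
      exact hβ.1.trans (h.trans hv.2)
    · exact fun hp => ⟨hi, right_mem_Icc.2 hlh, p, left_mem_Icc.2 hpq, hp⟩
  · constructor
    · rintro ⟨v, hv, β, hβ, h⟩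
      exact hv.1.trans (h.trans hβ.2)
    · exact fun hq => ⟨lo, left_mem_Icc.2 hlh, q, right_mem_Icc.2 hpq, hq⟩

end IRel

lemma mem_Icc_ite_iff {lo hi a a' : ℝ} (ha' : a' ∈ Icc lo hi) (q : Bool) :
    a ∈ Icc (if q then a' else lo) (if q then a' else hi) ↔
      a ∈ Icc lo hi ∧ (q = true → a = a') := by
  cases q
  · simp
  · simp only [if_true, Set.Icc_self, mem_singleton_iff, forall_const]
    exact ⟨fun h => ⟨h ▸ ha', h⟩, And.right⟩

lemma max_ite_mul_ite (q : Bool) (a' lo hi x : ℝ) :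
    max ((if q then a' else lo) * x) ((if q then a' else hi) * x) =
      if q then a' * x else max (lo * x) (hi * x) := by
  cases q <;> simp

lemma min_ite_mul_ite (q : Bool) (a' lo hi x : ℝ) :
    min ((if q then a' else lo) * x) ((if q then a' else hi) * x) =
      if q then a' * x else min (lo * x) (hi * x) := by
  cases q <;> simp

section AESol

variable {m n : ℕ} {Alo Ahi A' : Matrix (Fin m) (Fin n) ℝ} {blo bhi b' : Fin m → ℝ}

lemma memIM_and_agree_iff (hA' : memIM Alo Ahi A') (qA : Fin m → Fin n → Bool)
    (A : Matrix (Fin m) (Fin n) ℝ) :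
    memIM Alo Ahi A ∧ (∀ i j, qA i j = true → A i j = A' i j) ↔
      ∀ i, A i ∈ pi univ fun j =>
        Icc (if qA i j then A' i j else Alo i j) (if qA i j then A' i j else Ahi i j) := by
  simp only [memIM, mem_pi, mem_univ, forall_const, mem_Icc_ite_iff (hA' _ _), Set.mem_Icc,
    forall_and]

lemma memIV_and_agree_iff (hb' : memIV blo bhi b') (qb : Fin m → Bool) (b : Fin m → ℝ) :
    memIV blo bhi b ∧ (∀ i, qb i = true → b i = b' i) ↔
      ∀ i, b i ∈ Icc (if qb i then b' i else blo i) (if qb i then b' i else bhi i) := by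
  simp only [memIV, mem_Icc_ite_iff (hb' _), Set.mem_Icc, forall_and]

theorem aesol_iff_forall_feasible (hA : ∀ i j, Alo i j ≤ Ahi i j) (hb : ∀ i, blo i ≤ bhi i)
    (qA : Fin m → Fin n → Bool) (qb : Fin m → Bool) (ρ : Fin m → IRel) (x : Fin n → ℝ) :
    AESol Alo Ahi blo bhi qA qb (fun i a b => (ρ i).holds a b) x ↔
      ∀ A' b', memIM Alo Ahi A' → memIV blo bhi b' → ∀ i, (ρ i).Feasible
        (∑ j, if qA i j then A' i j * x j else max (Alo i j * x j) (Ahi i j * x j))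
        (∑ j, if qA i j then A' i j * x j else min (Alo i j * x j) (Ahi i j * x j))
        (if qb i then b' i else blo i) (if qb i then b' i else bhi i) := by
  refine forall₂_congr fun A' b' => imp_congr_right fun hA' => imp_congr_right fun hb' => ?_
  calc
    _ ↔ ∃ A : Matrix (Fin m) (Fin n) ℝ, ∃ b : Fin m → ℝ,
          (∀ i, A i ∈ pi univ fun j =>
            Icc (if qA i j then A' i j else Alo i j) (if qA i j then A' i j else Ahi i j)) ∧
          (∀ i, b i ∈ Icc (if qb i then b' i else blo i) (if qb i then b' i else bhi i)) ∧
          ∀ i, (ρ i).holds (∑ j, A i j * x j) (b i) := by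
      refine exists₂_congr fun A b => ?_
      rw [← memIM_and_agree_iff hA' qA A, ← memIV_and_agree_iff hb' qb b]
      tauto
    _ ↔ ∀ i, ∃ a ∈ pi univ (fun j =>
            Icc (if qA i j then A' i j else Alo i j) (if qA i j then A' i j else Ahi i j)),
          ∃ β ∈ Icc (if qb i then b' i else blo i) (if qb i then b' i else bhi i),
            (ρ i).holds (∑ j, a j * x j) β := by
      refine ⟨fun ⟨A, b, hA, hb, hρ⟩ i => ⟨A i, hA i, b i, hb i, hρ i⟩, fun h => ?_⟩
      choose A hA b hb hρ using h
      exact ⟨A, b, hA, hb, hρ⟩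
    _ ↔ _ := forall_congr' fun i => by
      have hbox : ∀ j,
          (if qA i j then A' i j else Alo i j) ≤ (if qA i j then A' i j else Ahi i j) := fun j => by
        split_ifs; exacts [le_rfl, hA i j]
      have himage := image_sum_mul_pi_Icc hbox x
      simp only [min_ite_mul_ite, max_ite_mul_ite] at himage
      rw [← (ρ i).exists_mem_Icc_holds_iff, ← himage, Set.exists_mem_image]
      · exact Finset.sum_le_sum fun j _ => by split_ifs; exacts [le_rfl, min_le_max]
      · split_ifs; exacts [le_rfl, hb i]

theorem forall_feasible_iff_feasible_min_max (hA : ∀ i j, Alo i j ≤ Ahi i j)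
    (hb : ∀ i, blo i ≤ bhi i) (qA : Fin m → Fin n → Bool) (qb : Fin m → Bool)
    (ρ : Fin m → IRel) (x : Fin n → ℝ) :
    (∀ A' b', memIM Alo Ahi A' → memIV blo bhi b' → ∀ i, (ρ i).Feasible
        (∑ j, if qA i j then A' i j * x j else max (Alo i j * x j) (Ahi i j * x j))
        (∑ j, if qA i j then A' i j * x j else min (Alo i j * x j) (Ahi i j * x j))
        (if qb i then b' i else blo i) (if qb i then b' i else bhi i)) ↔
      ∀ i, (ρ i).Feasible
        (∑ j, if qA i j then min (Alo i j * x j) (Ahi i j * x j)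
          else max (Alo i j * x j) (Ahi i j * x j))
        (∑ j, if qA i j then max (Alo i j * x j) (Ahi i j * x j)
          else min (Alo i j * x j) (Ahi i j * x j))
        (if qb i then bhi i else blo i) (if qb i then blo i else bhi i) := by
  refine ⟨fun h i => ?_, fun h A' b' hA' hb' i => (h i).mono ?_ ?_ ?_ ?_⟩
  · have hlow := h (fun i j => argminMul (Alo i j) (Ahi i j) (x j)) bhi
      (fun i j => argminMul_mem_Icc (hA i j) _) (fun i => ⟨hb i, le_rfl⟩) i
    have hhigh := h (fun i j => argmaxMul (Alo i j) (Ahi i j) (x j)) blo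
      (fun i j => argmaxMul_mem_Icc (hA i j) _) (fun i => ⟨le_rfl, hb i⟩) i
    simp only [argminMul_mul, argmaxMul_mul] at hlow hhigh
    exact hlow.combine hhigh
  · refine Finset.sum_le_sum fun j _ => ?_
    split_ifs
    exacts [(mul_mem_Icc_min_max (hA' i j) (x j)).1, le_rfl]
  · refine Finset.sum_le_sum fun j _ => ?_
    split_ifs
    exacts [(mul_mem_Icc_min_max (hA' i j) (x j)).2, le_rfl]
  · split_ifs
    exacts [(hb' i).2, le_rfl]
  · split_ifs
    exacts [(hb' i).1, le_rfl]

end AESol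

theorem stmt5 (m n : ℕ) (Alo Ahi : Matrix (Fin m) (Fin n) ℝ) (blo bhi : Fin m → ℝ)
    (hA : ∀ i j, Alo i j ≤ Ahi i j) (hb : ∀ i, blo i ≤ bhi i)
    (qA : Fin m → Fin n → Bool) (qb : Fin m → Bool) (x : Fin n → ℝ)
    (σ : Fin m → IRel) :
    AESol Alo Ahi blo bhi qA qb (fun i a b => (σ i).holds a b) x ↔
    ∀ i,
      match σ i with
      | .eq =>
          (∑ j, if qA i j then min (Alo i j * x j) (Ahi i j * x j)
              else max (Alo i j * x j) (Ahi i j * x j)) ≥ (if qb i then bhi i else blo i) ∧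
          (∑ j, if qA i j then max (Alo i j * x j) (Ahi i j * x j)
              else min (Alo i j * x j) (Ahi i j * x j)) ≤ (if qb i then blo i else bhi i)
      | .ge =>
          (∑ j, if qA i j then min (Alo i j * x j) (Ahi i j * x j)
              else max (Alo i j * x j) (Ahi i j * x j)) ≥ (if qb i then bhi i else blo i)
      | .le =>
          (∑ j, if qA i j then max (Alo i j * x j) (Ahi i j * x j)
              else min (Alo i j * x j) (Ahi i j * x j)) ≤ (if qb i then blo i else bhi i) := by
  rw [aesol_iff_forall_feasible hA hb, forall_feasible_iff_feasible_min_max hA hb]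
  refine forall_congr' fun i => ?_
  -- the statement's `match` unfolds to `IRel.Feasible` only at a constructor
  generalize σ i = ρ
  cases ρ <;> rfl
end

section
/- Let (Alo, Ahi) be an interval m×n matrix, (blo, bhi) an interval vector in ℝ^m, and (𝒜, β) a quantifier pattern. For every x ∈ ℝ^n: x is an AE-solution of the interval-quantifier system of equations A x = b if and only if x is simultaneously an AE-solution of the system of inequalities A x ≥ b and an AE-solution of the system of inequalities A x ≤ b, all three systems taken with the same interval data and the same quantifier pattern. -/
open Finset

/-! The admissible completions `(A, b)` of given universally quantified entries form a box
intersected with coordinate hyperplanes, hence a convex set, and every constraint involves a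
single row. If one completion gives row residual `∑ j, A i j * x j - b i ≥ 0` and another gives
`≤ 0`, the residual, being affine, vanishes at some convex combination of the two; doing this row
by row yields a completion solving the equations. -/

lemma exists_combo_eq_zero {u v : ℝ} (hu : 0 ≤ u) (hv : v ≤ 0) :
    ∃ s t : ℝ, 0 ≤ s ∧ 0 ≤ t ∧ s + t = 1 ∧ s * u + t * v = 0 := by
  show (0 : ℝ) ∈ segment ℝ u v
  rw [segment_symm, segment_eq_Icc (hv.trans hu)]
  exact ⟨hv, hu⟩

section RowCombination

variable {m n : ℕ} {s t : Fin m → ℝ}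

lemma memIM_rowCombo {Alo Ahi A₁ A₂ : Matrix (Fin m) (Fin n) ℝ}
    (h₁ : memIM Alo Ahi A₁) (h₂ : memIM Alo Ahi A₂)
    (hs : ∀ i, 0 ≤ s i) (ht : ∀ i, 0 ≤ t i) (hst : ∀ i, s i + t i = 1) :
    memIM Alo Ahi (fun i j => s i * A₁ i j + t i * A₂ i j) := fun i j =>
  convex_Icc (Alo i j) (Ahi i j) (h₁ i j) (h₂ i j) (hs i) (ht i) (hst i)

lemma memIV_rowCombo {blo bhi b₁ b₂ : Fin m → ℝ}
    (h₁ : memIV blo bhi b₁) (h₂ : memIV blo bhi b₂)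
    (hs : ∀ i, 0 ≤ s i) (ht : ∀ i, 0 ≤ t i) (hst : ∀ i, s i + t i = 1) :
    memIV blo bhi (fun i => s i * b₁ i + t i * b₂ i) := fun i =>
  convex_Icc (blo i) (bhi i) (h₁ i) (h₂ i) (hs i) (ht i) (hst i)

lemma sum_rowCombo_mul (A₁ A₂ : Matrix (Fin m) (Fin n) ℝ) (x : Fin n → ℝ) (i : Fin m) :
    ∑ j, (s i * A₁ i j + t i * A₂ i j) * x j =
      s i * ∑ j, A₁ i j * x j + t i * ∑ j, A₂ i j * x j := by
  simp only [add_mul, mul_assoc, Finset.sum_add_distrib, ← Finset.mul_sum]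

end RowCombination

section AESol

variable {m n : ℕ} {Alo Ahi : Matrix (Fin m) (Fin n) ℝ} {blo bhi : Fin m → ℝ}
  {qA : Fin m → Fin n → Bool} {qb : Fin m → Bool} {x : Fin n → ℝ}

lemma AESol.mono {rel rel' : Fin m → ℝ → ℝ → Prop} (hrel : ∀ i a b, rel i a b → rel' i a b)
    (h : AESol Alo Ahi blo bhi qA qb rel x) : AESol Alo Ahi blo bhi qA qb rel' x := by
  intro A' b' hA' hb'
  obtain ⟨A, b, hA, hb, hqA, hqb, hrow⟩ := h A' b' hA' hb'
  exact ⟨A, b, hA, hb, hqA, hqb, fun i => hrel i _ _ (hrow i)⟩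

lemma AESol.eq_of_ge_of_le (hge : AESol Alo Ahi blo bhi qA qb (fun _ a b => a ≥ b) x)
    (hle : AESol Alo Ahi blo bhi qA qb (fun _ a b => a ≤ b) x) :
    AESol Alo Ahi blo bhi qA qb (fun _ a b => a = b) x := by
  intro A' b' hA' hb'
  obtain ⟨A₁, b₁, hA₁, hb₁, hqA₁, hqb₁, hrow₁⟩ := hge A' b' hA' hb'
  obtain ⟨A₂, b₂, hA₂, hb₂, hqA₂, hqb₂, hrow₂⟩ := hle A' b' hA' hb'
  choose s t hs ht hst hzero using fun i =>
    exists_combo_eq_zero (sub_nonneg.2 (hrow₁ i)) (sub_nonpos.2 (hrow₂ i))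
  refine ⟨fun i j => s i * A₁ i j + t i * A₂ i j, fun i => s i * b₁ i + t i * b₂ i,
    memIM_rowCombo hA₁ hA₂ hs ht hst, memIV_rowCombo hb₁ hb₂ hs ht hst, ?_, ?_, ?_⟩
  · intro i j hq
    simp only [hqA₁ i j hq, hqA₂ i j hq, ← add_mul, hst i, one_mul]
  · intro i hq
    simp only [hqb₁ i hq, hqb₂ i hq, ← add_mul, hst i, one_mul]
  · intro i
    rw [sum_rowCombo_mul]
    linear_combination hzero i

end AESol

theorem stmt6_general (m n : ℕ) (Alo Ahi : Matrix (Fin m) (Fin n) ℝ) (blo bhi : Fin m → ℝ)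
    (qA : Fin m → Fin n → Bool) (qb : Fin m → Bool) (x : Fin n → ℝ) :
    AESol Alo Ahi blo bhi qA qb (fun _ a b => a = b) x ↔
    (AESol Alo Ahi blo bhi qA qb (fun _ a b => a ≥ b) x ∧
     AESol Alo Ahi blo bhi qA qb (fun _ a b => a ≤ b) x) :=
  ⟨fun h => ⟨h.mono fun _ _ _ => ge_of_eq, h.mono fun _ _ _ => le_of_eq⟩,
    fun ⟨hge, hle⟩ => hge.eq_of_ge_of_le hle⟩

theorem stmt6 (m n : ℕ) (Alo Ahi : Matrix (Fin m) (Fin n) ℝ) (blo bhi : Fin m → ℝ)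
    (hA : ∀ i j, Alo i j ≤ Ahi i j) (hb : ∀ i, blo i ≤ bhi i)
    (qA : Fin m → Fin n → Bool) (qb : Fin m → Bool) (x : Fin n → ℝ) :
    AESol Alo Ahi blo bhi qA qb (fun _ a b => a = b) x ↔
    (AESol Alo Ahi blo bhi qA qb (fun _ a b => a ≥ b) x ∧
     AESol Alo Ahi blo bhi qA qb (fun _ a b => a ≤ b) x) :=
  stmt6_general m n Alo Ahi blo bhi qA qb x
end

section
/- Let (Alo, Ahi) be an interval m×n matrix, (blo, bhi) an interval vector in ℝ^m, and (𝒜, β) a quantifier pattern. For every x ∈ ℝ^n: x is an AE-solution of the interval-quantifier system of equations A x = b if and only if for every row i, |Σ_j Ǎ_{ij} x_j − b̌_i| ≤ Σ_j 𝒜^s_{ij} Â_{ij} |x_j| + β^s_i b̂_i. -/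
open Finset

/-!
Rows decouple, so fix a row and values `(a', b')` of its `∀`-entries. The pairs `(a, b)` in the
box that agree with `(a', b')` form a convex set on which the residual `∑ⱼ aⱼ xⱼ - b` is
continuous, so it vanishes somewhere iff its minimum is `≤ 0` and its maximum is `≥ 0`. Both
extrema are attained at vertices chosen by the signs of the `xⱼ`, and so is the worst case over
`(a', b')`: there the minimum is `Ǎx - b̌ - S` and the maximum `Ǎx - b̌ + S`, where
`S = ∑ⱼ 𝒜ˢ Â |xⱼ| + βˢ b̂`.
-/

open Set

lemma abs_mul_sub_mid_mul_le {lo hi a : ℝ} (x : ℝ) (ha : a ∈ Icc lo hi) :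
    |a * x - (lo + hi) / 2 * x| ≤ (hi - lo) / 2 * |x| := by
  rw [← sub_mul, abs_mul]
  gcongr
  rw [abs_le]
  constructor <;> linarith [ha.1, ha.2]

noncomputable section Vertex

variable {ι : Type*} (lo hi x : ι → ℝ)

def maxVertex : ι → ℝ := fun j => if 0 ≤ x j then hi j else lo j

def minVertex : ι → ℝ := fun j => if 0 ≤ x j then lo j else hi j

variable {lo hi x}

lemma maxVertex_mul (j : ι) :
    maxVertex lo hi x j * x j = (lo j + hi j) / 2 * x j + (hi j - lo j) / 2 * |x j| := by
  unfold maxVertex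
  split_ifs with h
  · rw [abs_of_nonneg h]; ring
  · rw [abs_of_neg (not_le.1 h)]; ring

lemma minVertex_mul (j : ι) :
    minVertex lo hi x j * x j = (lo j + hi j) / 2 * x j - (hi j - lo j) / 2 * |x j| := by
  unfold minVertex
  split_ifs with h
  · rw [abs_of_nonneg h]; ring
  · rw [abs_of_neg (not_le.1 h)]; ring

lemma maxVertex_mem (hA : ∀ j, lo j ≤ hi j) (j : ι) : maxVertex lo hi x j ∈ Icc (lo j) (hi j) := by
  unfold maxVertex
  split_ifs
  exacts [⟨hA j, le_rfl⟩, ⟨le_rfl, hA j⟩]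

lemma minVertex_mem (hA : ∀ j, lo j ≤ hi j) (j : ι) : minVertex lo hi x j ∈ Icc (lo j) (hi j) := by
  unfold minVertex
  split_ifs
  exacts [⟨le_rfl, hA j⟩, ⟨hA j, le_rfl⟩]

end Vertex

section Admissible

variable {ι : Type*} (lo hi : ι → ℝ) (blo bhi : ℝ) (qA : ι → Bool) (qb : Bool)

def Admissible (a' : ι → ℝ) (b' : ℝ) : Set ((ι → ℝ) × ℝ) :=
  {p | (∀ j, p.1 j ∈ Icc (lo j) (hi j)) ∧ p.2 ∈ Icc blo bhi ∧
    (∀ j, qA j = true → p.1 j = a' j) ∧ (qb = true → p.2 = b')}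

variable {lo hi blo bhi qA qb}

lemma convex_admissible (a' : ι → ℝ) (b' : ℝ) :
    Convex ℝ (Admissible lo hi blo bhi qA qb a' b') := by
  rintro p ⟨hp, hpb, hpq, hpqb⟩ q ⟨hq, hqb, hqq, hqqb⟩ s t hs ht hst
  refine ⟨fun j => convex_Icc (lo j) (hi j) (hp j) (hq j) hs ht hst,
    convex_Icc blo bhi hpb hqb hs ht hst, fun j hj => ?_, fun hj => ?_⟩
  · simp only [Prod.fst_add, Prod.smul_fst, Pi.add_apply, Pi.smul_apply, smul_eq_mul]
    rw [hpq j hj, hqq j hj, ← add_mul, hst, one_mul]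
  · simp only [Prod.snd_add, Prod.smul_snd, smul_eq_mul]
    rw [hpqb hj, hqqb hj, ← add_mul, hst, one_mul]

end Admissible

noncomputable section Row

variable {ι : Type*} [Fintype ι] (lo hi : ι → ℝ) (blo bhi : ℝ) (qA : ι → Bool) (qb : Bool)
  (x : ι → ℝ)

def midResidual : ℝ :=
  ∑ j, (lo j + hi j) / 2 * x j - (blo + bhi) / 2

def slack : ℝ :=
  (∑ j, (if qA j then (-1 : ℝ) else 1) * ((hi j - lo j) / 2) * |x j|) +
    (if qb then (-1 : ℝ) else 1) * ((bhi - blo) / 2)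

def rowResidual (p : (ι → ℝ) × ℝ) : ℝ :=
  ∑ j, p.1 j * x j - p.2

def RowAESol : Prop :=
  ∀ a' b', (∀ j, a' j ∈ Icc (lo j) (hi j)) → b' ∈ Icc blo bhi →
    ∃ p ∈ Admissible lo hi blo bhi qA qb a' b', rowResidual x p = 0

variable {lo hi blo bhi qA qb x} {p : (ι → ℝ) × ℝ} {a' : ι → ℝ} {b' : ℝ}

lemma continuous_rowResidual (x : ι → ℝ) : Continuous (rowResidual x) := by
  unfold rowResidual
  fun_prop

lemma midResidual_sub_slack_le_rowResidual
    (hp : p ∈ Admissible lo hi blo bhi qA qb (maxVertex lo hi x) blo) :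
    midResidual lo hi blo bhi x - slack lo hi blo bhi qA qb x ≤ rowResidual x p := by
  obtain ⟨ha, hb, hqa, hqb⟩ := hp
  have hcol : ∀ j, (lo j + hi j) / 2 * x j -
      (if qA j then (-1 : ℝ) else 1) * ((hi j - lo j) / 2) * |x j| ≤ p.1 j * x j := by
    intro j
    have hmid := abs_le.1 (abs_mul_sub_mid_mul_le (x j) (ha j))
    cases h : qA j
    · simp only [Bool.false_eq_true, if_false]; linarith
    · simp only [if_true, hqa j h, maxVertex_mul]; linarith
  have hrhs : p.2 ≤ (blo + bhi) / 2 + (if qb then (-1 : ℝ) else 1) * ((bhi - blo) / 2) := by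
    cases h : qb
    · simp only [Bool.false_eq_true, if_false]; linarith [hb.2]
    · simp only [if_true, hqb h]; linarith
  have hsum := sum_le_sum fun j (_ : j ∈ Finset.univ) => hcol j
  rw [sum_sub_distrib] at hsum
  simp only [midResidual, slack, rowResidual]
  linarith

lemma rowResidual_le_midResidual_add_slack
    (hp : p ∈ Admissible lo hi blo bhi qA qb (minVertex lo hi x) bhi) :
    rowResidual x p ≤ midResidual lo hi blo bhi x + slack lo hi blo bhi qA qb x := by
  obtain ⟨ha, hb, hqa, hqb⟩ := hp
  have hcol : ∀ j, p.1 j * x j ≤ (lo j + hi j) / 2 * x j +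
      (if qA j then (-1 : ℝ) else 1) * ((hi j - lo j) / 2) * |x j| := by
    intro j
    have hmid := abs_le.1 (abs_mul_sub_mid_mul_le (x j) (ha j))
    cases h : qA j
    · simp only [Bool.false_eq_true, if_false]; linarith
    · simp only [if_true, hqa j h, minVertex_mul]; linarith
  have hrhs : (blo + bhi) / 2 - (if qb then (-1 : ℝ) else 1) * ((bhi - blo) / 2) ≤ p.2 := by
    cases h : qb
    · simp only [Bool.false_eq_true, if_false]; linarith [hb.1]
    · simp only [if_true, hqb h]; linarith
  have hsum := sum_le_sum fun j (_ : j ∈ Finset.univ) => hcol j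
  rw [sum_add_distrib] at hsum
  simp only [midResidual, slack, rowResidual]
  linarith

lemma exists_mem_admissible_rowResidual_le (hA : ∀ j, lo j ≤ hi j) (hb : blo ≤ bhi)
    (ha' : ∀ j, a' j ∈ Icc (lo j) (hi j)) (hb' : b' ∈ Icc blo bhi) :
    ∃ p ∈ Admissible lo hi blo bhi qA qb a' b',
      rowResidual x p ≤ midResidual lo hi blo bhi x - slack lo hi blo bhi qA qb x := by
  refine ⟨(fun j => if qA j then a' j else minVertex lo hi x j, if qb then b' else bhi),
    ⟨fun j => ?_, ?_, fun j hj => if_pos hj, fun hj => if_pos hj⟩, ?_⟩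
  · dsimp only
    split_ifs
    exacts [ha' j, minVertex_mem hA j]
  · dsimp only
    split_ifs
    exacts [hb', ⟨hb, le_rfl⟩]
  have hcol : ∀ j, (if qA j then a' j else minVertex lo hi x j) * x j ≤
      (lo j + hi j) / 2 * x j - (if qA j then (-1 : ℝ) else 1) * ((hi j - lo j) / 2) * |x j| := by
    intro j
    have hmid := abs_le.1 (abs_mul_sub_mid_mul_le (x j) (ha' j))
    cases qA j
    · simp only [Bool.false_eq_true, if_false, minVertex_mul]; linarith
    · simp only [if_true]; linarith
  have hrhs : (blo + bhi) / 2 + (if qb then (-1 : ℝ) else 1) * ((bhi - blo) / 2) ≤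
      if qb then b' else bhi := by
    cases qb
    · simp only [Bool.false_eq_true, if_false]; linarith
    · simp only [if_true]; linarith [hb'.1]
  have hsum := sum_le_sum fun j (_ : j ∈ Finset.univ) => hcol j
  rw [sum_sub_distrib] at hsum
  simp only [midResidual, slack, rowResidual]
  linarith

lemma exists_mem_admissible_le_rowResidual (hA : ∀ j, lo j ≤ hi j) (hb : blo ≤ bhi)
    (ha' : ∀ j, a' j ∈ Icc (lo j) (hi j)) (hb' : b' ∈ Icc blo bhi) :
    ∃ p ∈ Admissible lo hi blo bhi qA qb a' b',
      midResidual lo hi blo bhi x + slack lo hi blo bhi qA qb x ≤ rowResidual x p := by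
  refine ⟨(fun j => if qA j then a' j else maxVertex lo hi x j, if qb then b' else blo),
    ⟨fun j => ?_, ?_, fun j hj => if_pos hj, fun hj => if_pos hj⟩, ?_⟩
  · dsimp only
    split_ifs
    exacts [ha' j, maxVertex_mem hA j]
  · dsimp only
    split_ifs
    exacts [hb', ⟨le_rfl, hb⟩]
  have hcol : ∀ j, (lo j + hi j) / 2 * x j +
      (if qA j then (-1 : ℝ) else 1) * ((hi j - lo j) / 2) * |x j| ≤
        (if qA j then a' j else maxVertex lo hi x j) * x j := by
    intro j
    have hmid := abs_le.1 (abs_mul_sub_mid_mul_le (x j) (ha' j))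
    cases qA j
    · simp only [Bool.false_eq_true, if_false, maxVertex_mul]; linarith
    · simp only [if_true]; linarith
  have hrhs : (if qb then b' else blo) ≤
      (blo + bhi) / 2 - (if qb then (-1 : ℝ) else 1) * ((bhi - blo) / 2) := by
    cases qb
    · simp only [Bool.false_eq_true, if_false]; linarith
    · simp only [if_true]; linarith [hb'.2]
  have hsum := sum_le_sum fun j (_ : j ∈ Finset.univ) => hcol j
  rw [sum_add_distrib] at hsum
  simp only [midResidual, slack, rowResidual]
  linarith

theorem rowAESol_iff (hA : ∀ j, lo j ≤ hi j) (hb : blo ≤ bhi) :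
    RowAESol lo hi blo bhi qA qb x ↔
      |midResidual lo hi blo bhi x| ≤ slack lo hi blo bhi qA qb x := by
  rw [abs_le]
  constructor
  · intro h
    obtain ⟨p, hp, hp0⟩ := h (maxVertex lo hi x) blo (maxVertex_mem hA) ⟨le_rfl, hb⟩
    obtain ⟨q, hq, hq0⟩ := h (minVertex lo hi x) bhi (minVertex_mem hA) ⟨hb, le_rfl⟩
    have hpR := midResidual_sub_slack_le_rowResidual hp
    have hqR := rowResidual_le_midResidual_add_slack hq
    constructor <;> linarith
  · rintro ⟨hneg, hpos⟩ a' b' ha' hb'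
    obtain ⟨p, hp, hpR⟩ := exists_mem_admissible_rowResidual_le (qA := qA) (qb := qb) (x := x)
      hA hb ha' hb'
    obtain ⟨q, hq, hqR⟩ := exists_mem_admissible_le_rowResidual (qA := qA) (qb := qb) (x := x)
      hA hb ha' hb'
    exact (convex_admissible a' b').isPreconnected.intermediate_value hp hq
      (continuous_rowResidual x).continuousOn ⟨by linarith, by linarith⟩

end Row

theorem aeSol_eq_iff_forall_rowAESol {m n : ℕ} {Alo Ahi : Matrix (Fin m) (Fin n) ℝ}
    {blo bhi : Fin m → ℝ} (hA : ∀ i j, Alo i j ≤ Ahi i j) (hb : ∀ i, blo i ≤ bhi i)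
    (qA : Fin m → Fin n → Bool) (qb : Fin m → Bool) (x : Fin n → ℝ) :
    AESol Alo Ahi blo bhi qA qb (fun _ a b => a = b) x ↔
      ∀ i, RowAESol (Alo i) (Ahi i) (blo i) (bhi i) (qA i) (qb i) x := by
  constructor
  · intro h i a' b' ha' hb'
    have hAext : memIM Alo Ahi fun k => if k = i then a' else Alo k := by
      intro k j
      dsimp only
      split_ifs with hk
      exacts [hk ▸ ha' j, ⟨le_rfl, hA k j⟩]
    have hbext : memIV blo bhi fun k => if k = i then b' else blo k := by
      intro k
      dsimp only
      split_ifs with hk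
      exacts [hk ▸ hb', ⟨le_rfl, hb k⟩]
    obtain ⟨A, b, hAm, hbm, hqA, hqb, hsol⟩ := h _ _ hAext hbext
    exact ⟨(A i, b i), ⟨hAm i, hbm i, fun j hj => by simpa using hqA i j hj,
      fun hj => by simpa using hqb i hj⟩, sub_eq_zero.2 (hsol i)⟩
  · intro h A' b' hA' hb'
    choose p hp hres using fun i => h i (A' i) (b' i) (hA' i) (hb' i)
    exact ⟨fun i => (p i).1, fun i => (p i).2, fun i => (hp i).1, fun i => (hp i).2.1,
      fun i => (hp i).2.2.1, fun i => (hp i).2.2.2, fun i => sub_eq_zero.1 (hres i)⟩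

theorem stmt7 (m n : ℕ) (Alo Ahi : Matrix (Fin m) (Fin n) ℝ) (blo bhi : Fin m → ℝ)
    (hA : ∀ i j, Alo i j ≤ Ahi i j) (hb : ∀ i, blo i ≤ bhi i)
    (qA : Fin m → Fin n → Bool) (qb : Fin m → Bool) (x : Fin n → ℝ) :
    AESol Alo Ahi blo bhi qA qb (fun _ a b => a = b) x ↔
    ∀ i,
      |∑ j, ((Alo i j + Ahi i j) / 2) * x j - (blo i + bhi i) / 2| ≤
        (∑ j, (if qA i j then (-1 : ℝ) else 1) * ((Ahi i j - Alo i j) / 2) * |x j|) +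
          (if qb i then (-1 : ℝ) else 1) * ((bhi i - blo i) / 2) := by
  rw [aeSol_eq_iff_forall_rowAESol hA hb]
  exact forall_congr' fun i => rowAESol_iff (hA i) (hb i)
end

section
/- Let (Alo, Ahi) be an interval m×n matrix, (blo, bhi) an interval vector in ℝ^m, and (𝒜, β) a quantifier pattern. For every x ∈ ℝ^n: x is an AE-solution of the interval-quantifier system of inequalities A x ≤ b if and only if for every row i, Σ_j Ǎ_{ij} x_j − b̌_i ≤ Σ_j 𝒜^s_{ij} Â_{ij} |x_j| + β^s_i b̂_i. -/
open Finset

/-!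
Each row of the system can be treated separately, and within a row each coefficient separately.
For `a ∈ [lo, hi]` the product `a * x` ranges exactly over `[ǎ x - â |x|, ǎ x + â |x|]`, the ends
being attained at the endpoints of the interval chosen according to the sign of `x`. So the
universally quantified coefficients can be pushed by an adversary to the top end `ǎ x + â |x|`
(and a universally quantified `b_i` to `blo`), while the existentially quantified ones can always
be brought down to `ǎ x - â |x|` (and an existential `b_i` up to `bhi`). The row inequality
`∑ⱼ A_ij x_j ≤ b_i` is then satisfiable against every adversary iff it holds at these extremes,
which is the stated inequality.
-/

section IntervalProduct

variable {lo hi a x : ℝ}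

theorem ite_nonneg_mul_eq_mid_add (lo hi x : ℝ) :
    (if 0 ≤ x then hi else lo) * x = (lo + hi) / 2 * x + (hi - lo) / 2 * |x| := by
  rcases le_or_gt 0 x with h | h
  · rw [if_pos h, abs_of_nonneg h]; ring
  · rw [if_neg h.not_ge, abs_of_neg h]; ring

theorem ite_nonneg_mul_eq_mid_sub (lo hi x : ℝ) :
    (if 0 ≤ x then lo else hi) * x = (lo + hi) / 2 * x - (hi - lo) / 2 * |x| := by
  rw [ite_nonneg_mul_eq_mid_add hi lo x]; ring

theorem mid_mul_sub_le_mul (h₁ : lo ≤ a) (h₂ : a ≤ hi) :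
    (lo + hi) / 2 * x - (hi - lo) / 2 * |x| ≤ a * x := by
  rw [← ite_nonneg_mul_eq_mid_sub]
  split_ifs with h
  · exact mul_le_mul_of_nonneg_right h₁ h
  · exact mul_le_mul_of_nonpos_right h₂ (not_le.1 h).le

theorem mul_le_mid_mul_add (h₁ : lo ≤ a) (h₂ : a ≤ hi) :
    a * x ≤ (lo + hi) / 2 * x + (hi - lo) / 2 * |x| := by
  have h := mid_mul_sub_le_mul (x := -x) h₁ h₂
  rw [abs_neg] at h
  linarith

theorem mid_mul_sub_sign_le_mul {q : Bool} (h₁ : lo ≤ a) (h₂ : a ≤ hi)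
    (hq : q = true → a = if 0 ≤ x then hi else lo) :
    (lo + hi) / 2 * x - (if q then (-1 : ℝ) else 1) * ((hi - lo) / 2) * |x| ≤ a * x := by
  cases q
  · simpa using mid_mul_sub_le_mul (x := x) h₁ h₂
  · rw [hq rfl, ite_nonneg_mul_eq_mid_add]; simp

theorem ite_mul_le_mid_mul_sub_sign (q : Bool) (h₁ : lo ≤ a) (h₂ : a ≤ hi) :
    (if q then a else if 0 ≤ x then lo else hi) * x ≤
      (lo + hi) / 2 * x - (if q then (-1 : ℝ) else 1) * ((hi - lo) / 2) * |x| := by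
  cases q
  · simp only [Bool.false_eq_true, if_false, ite_nonneg_mul_eq_mid_sub, one_mul, le_refl]
  · simpa using mul_le_mid_mul_add (x := x) h₁ h₂

theorem le_mid_add_sign {q : Bool} (h₂ : a ≤ hi) (hq : q = true → a = lo) :
    a ≤ (lo + hi) / 2 + (if q then (-1 : ℝ) else 1) * ((hi - lo) / 2) := by
  cases q
  · simp only [Bool.false_eq_true, ↓reduceIte]; linarith
  · simp only [hq rfl, ↓reduceIte]; linarith

theorem mid_add_sign_le_ite (q : Bool) (h₁ : lo ≤ a) :
    (lo + hi) / 2 + (if q then (-1 : ℝ) else 1) * ((hi - lo) / 2) ≤ if q then a else hi := by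
  cases q
  · simp only [Bool.false_eq_true, ↓reduceIte]; linarith
  · simp only [↓reduceIte]; linarith

end IntervalProduct

theorem stmt9 (m n : ℕ) (Alo Ahi : Matrix (Fin m) (Fin n) ℝ) (blo bhi : Fin m → ℝ)
    (hA : ∀ i j, Alo i j ≤ Ahi i j) (hb : ∀ i, blo i ≤ bhi i)
    (qA : Fin m → Fin n → Bool) (qb : Fin m → Bool) (x : Fin n → ℝ) :
    AESol Alo Ahi blo bhi qA qb (fun _ a b => a ≤ b) x ↔
    ∀ i,
      (∑ j, ((Alo i j + Ahi i j) / 2) * x j - (blo i + bhi i) / 2) ≤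
        (∑ j, (if qA i j then (-1 : ℝ) else 1) * ((Ahi i j - Alo i j) / 2) * |x j|) +
          (if qb i then (-1 : ℝ) else 1) * ((bhi i - blo i) / 2) := by
  constructor
  · intro h i
    obtain ⟨A, b, hAmem, hbmem, hAeq, hbeq, hrow⟩ :=
      h (fun i j => if 0 ≤ x j then Ahi i j else Alo i j) blo
        (fun i j => by dsimp only; split_ifs <;> constructor <;> linarith [hA i j])
        (fun i => ⟨le_rfl, hb i⟩)
    have hAx := sum_le_sum fun j (_ : j ∈ univ) =>
      mid_mul_sub_sign_le_mul (hAmem i j).1 (hAmem i j).2 (hAeq i j)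
    have hbi := le_mid_add_sign (hbmem i).2 (hbeq i)
    rw [sum_sub_distrib] at hAx
    linarith [hrow i]
  · intro h A' b' hA' hb'
    refine ⟨fun i j => if qA i j then A' i j else if 0 ≤ x j then Alo i j else Ahi i j,
      fun i => if qb i then b' i else bhi i,
      fun i j => by dsimp only; split_ifs <;> constructor <;> linarith [hA i j, hA' i j],
      fun i => by dsimp only; split_ifs <;> constructor <;> linarith [hb i, hb' i],
      fun i j hq => if_pos hq, fun i hq => if_pos hq, fun i => ?_⟩
    have hAx := sum_le_sum fun j (_ : j ∈ univ) =>
      ite_mul_le_mid_mul_sub_sign (x := x j) (qA i j) (hA' i j).1 (hA' i j).2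
    have hbi := mid_add_sign_le_ite (hi := bhi i) (qb i) (hb' i).1
    rw [sum_sub_distrib] at hAx
    linarith [h i]
end

section
/- Let (Alo, Ahi) be an interval m×n matrix, (blo, bhi) an interval vector in ℝ^m, (𝒜, β) a quantifier pattern, and σ a relation vector with σ_i ∈ {=, ≥, ≤} for each row i. For every x ∈ ℝ^n: x is an AE-solution of the mixed interval-quantifier system A x σ b if and only if for every row i, abs^σ_i(Σ_j Ǎ_{ij} x_j − b̌_i) ≤ Σ_j 𝒜^s_{ij} Â_{ij} |x_j| + β^s_i b̂_i, where abs^σ_i(y) = |y| if σ_i is '=', abs^σ_i(y) = −y if σ_i is '≥', and abs^σ_i(y) = y if σ_i is '≤'. -/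
open Finset

/-- The row-wise convolution operation `abs^σ`. -/
def IRel.absr : IRel → ℝ → ℝ
  | .eq, y => |y|
  | .ge, y => -y
  | .le, y => y

/-! Write every entry as midpoint plus deviation. In row `i`, `∑ⱼ Aᵢⱼ xⱼ - bᵢ` is the central
residual `c = ∑ⱼ Ǎᵢⱼ xⱼ - b̌ᵢ` plus the deviation `u` contributed by the ∀-entries plus the
deviation `w` contributed by the ∃-entries. As the entries range over their intervals, `u` and `w`
range independently over all of `[-R, R]` and `[-S, S]`, where `R` and `S` are the sums of
`Âᵢⱼ |xⱼ|` (and `b̂ᵢ`) over the ∀- and ∃-positions respectively. So row `i` holds iff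
`∀ u ∈ [-R, R], ∃ w ∈ [-S, S], (c + u + w) σᵢ 0`, i.e. iff `abs^σᵢ c ≤ S - R`. Different rows
share no ∃-entries, so the system is an AE-solution iff each row is. -/

theorem mem_Icc_iff_forall_mem_Icc {ι α : Type*} [Preorder α] {a lo hi : ι → α} :
    a ∈ Set.Icc lo hi ↔ ∀ k, a k ∈ Set.Icc (lo k) (hi k) := by
  rw [← Set.pi_univ_Icc, Set.mem_univ_pi]

theorem mem_Icc_iff_abs_sub_mid_le {lo hi a : ℝ} :
    a ∈ Set.Icc lo hi ↔ |a - (lo + hi) / 2| ≤ (hi - lo) / 2 := by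
  rw [Set.mem_Icc, abs_le]
  constructor <;> rintro ⟨h₁, h₂⟩ <;> constructor <;> linarith

theorem IRel.holds_iff_holds_sub (σ : IRel) (a b : ℝ) : σ.holds a b ↔ σ.holds (a - b) 0 := by
  cases σ <;> simp [IRel.holds, sub_eq_zero, sub_nonneg]

theorem IRel.forall_exists_holds_iff (σ : IRel) {c R S : ℝ} (hR : 0 ≤ R) (hS : 0 ≤ S) :
    (∀ u, |u| ≤ R → ∃ w, |w| ≤ S ∧ σ.holds (c + u + w) 0) ↔ σ.absr c ≤ S - R := by
  cases σ <;> simp only [IRel.holds, IRel.absr]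
  case eq =>
    constructor
    · intro h
      obtain ⟨w, hw, hsum⟩ :=
        h (if 0 ≤ c then R else -R) (by split_ifs <;> simp [abs_of_nonneg hR])
      have hw' := abs_le.mp hw
      split_ifs at hsum with hc
      · rw [abs_of_nonneg hc]; linarith
      · rw [abs_of_neg (not_le.mp hc)]; linarith
    · intro h u hu
      refine ⟨-(c + u), ?_, by ring⟩
      calc |-(c + u)| ≤ |c| + |u| := (abs_neg (c + u)).trans_le (abs_add_le c u)
        _ ≤ S := by linarith
  case ge =>
    constructor
    · intro h
      obtain ⟨w, hw, hsum⟩ := h (-R) (by rw [abs_neg, abs_of_nonneg hR])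
      linarith [(abs_le.mp hw).2]
    · intro h u hu
      exact ⟨S, (abs_of_nonneg hS).le, by linarith [(abs_le.mp hu).1]⟩
  case le =>
    constructor
    · intro h
      obtain ⟨w, hw, hsum⟩ := h R (abs_of_nonneg hR).le
      linarith [(abs_le.mp hw).1]
    · intro h u hu
      exact ⟨-S, by rw [abs_neg, abs_of_nonneg hS], by linarith [(abs_le.mp hu).2]⟩

section Box

variable {ι : Type*} {lo hi x : ι → ℝ}

theorem mem_Icc_iff_forall_abs_sub_mid_le {a : ι → ℝ} :
    a ∈ Set.Icc lo hi ↔ ∀ k, |a k - (lo k + hi k) / 2| ≤ (hi k - lo k) / 2 := by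
  simp only [mem_Icc_iff_forall_mem_Icc, mem_Icc_iff_abs_sub_mid_le]

theorem abs_sum_sub_mid_mul_le {a : ι → ℝ} (ha : a ∈ Set.Icc lo hi) (s : Finset ι) :
    |∑ k ∈ s, (a k - (lo k + hi k) / 2) * x k| ≤ ∑ k ∈ s, (hi k - lo k) / 2 * |x k| :=
  (abs_sum_le_sum_abs _ _).trans <| sum_le_sum fun k _ => by
    rw [abs_mul]
    exact mul_le_mul_of_nonneg_right (mem_Icc_iff_forall_abs_sub_mid_le.mp ha k) (abs_nonneg _)

theorem exists_mem_Icc_sum_sub_mid_mul_eq (hlohi : lo ≤ hi) {a' : ι → ℝ}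
    (ha' : a' ∈ Set.Icc lo hi) (s : Finset ι) {v : ℝ}
    (hv : |v| ≤ ∑ k ∈ s, (hi k - lo k) / 2 * |x k|) :
    ∃ a ∈ Set.Icc lo hi, (∀ k ∉ s, a k = a' k) ∧
      ∑ k ∈ s, (a k - (lo k + hi k) / 2) * x k = v := by
  classical
  set r := ∑ k ∈ s, (hi k - lo k) / 2 * |x k|
  have hθ : |v / r| ≤ 1 := by
    rw [abs_div]; exact div_le_one_of_le₀ (hv.trans (le_abs_self r)) (abs_nonneg r)
  -- move each free coordinate the same fraction `v / r` of its radius, in the direction of `x k`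
  let a k := if k ∈ s then (lo k + hi k) / 2 + v / r * ((hi k - lo k) / 2) * SignType.sign (x k)
    else a' k
  refine ⟨a, mem_Icc_iff_forall_abs_sub_mid_le.mpr fun k => ?_, fun k hk => if_neg hk, ?_⟩
  · by_cases hk : k ∈ s
    · have hrad : 0 ≤ (hi k - lo k) / 2 := by linarith [hlohi k]
      have hsign : |(SignType.sign (x k) : ℝ)| ≤ 1 := by
        rcases lt_trichotomy (x k) 0 with h | h | h <;> simp [h]
      simp only [a, if_pos hk, add_sub_cancel_left, abs_mul, abs_of_nonneg hrad]
      calc |v / r| * ((hi k - lo k) / 2) * |(SignType.sign (x k) : ℝ)|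
          ≤ 1 * ((hi k - lo k) / 2) * 1 := by gcongr
        _ = (hi k - lo k) / 2 := by ring
    · simpa [a, hk] using mem_Icc_iff_forall_abs_sub_mid_le.mp ha' k
  · calc ∑ k ∈ s, (a k - (lo k + hi k) / 2) * x k
        = ∑ k ∈ s, v / r * ((hi k - lo k) / 2 * |x k|) := sum_congr rfl fun k hk => by
          simp only [a, if_pos hk, add_sub_cancel_left, ← self_mul_sign (x k)]; ring
      _ = v := by
        rw [← mul_sum]
        exact div_mul_cancel_of_imp fun hr => abs_nonpos_iff.mp (hr ▸ hv)

theorem forall_exists_mem_Icc_holds_iff [Fintype ι] (hlohi : lo ≤ hi)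
    (q : ι → Bool) (σ : IRel) :
    (∀ a' ∈ Set.Icc lo hi, ∃ a ∈ Set.Icc lo hi, (∀ k, q k → a k = a' k) ∧
      σ.holds (∑ k, a k * x k) 0) ↔
    σ.absr (∑ k, (lo k + hi k) / 2 * x k) ≤
      ∑ k, (if q k then (-1 : ℝ) else 1) * ((hi k - lo k) / 2) * |x k| := by
  set F := univ.filter fun k => q k
  set E := univ.filter fun k => ¬q k
  set dev : Finset ι → (ι → ℝ) → ℝ := fun s a => ∑ k ∈ s, (a k - (lo k + hi k) / 2) * x k
  have hsplit : ∀ a : ι → ℝ,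
      ∑ k, a k * x k = ∑ k, (lo k + hi k) / 2 * x k + dev F a + dev E a := by
    intro a
    rw [add_assoc, sum_filter_add_sum_filter_not, ← sum_add_distrib]
    exact sum_congr rfl fun k _ => by ring
  have hrhs : ∑ k, (if q k then (-1 : ℝ) else 1) * ((hi k - lo k) / 2) * |x k| =
      ∑ k ∈ E, (hi k - lo k) / 2 * |x k| - ∑ k ∈ F, (hi k - lo k) / 2 * |x k| := by
    simp only [ite_mul, neg_mul, one_mul, sum_ite, sum_neg_distrib]
    exact neg_add_eq_sub _ _
  have hrad : ∀ s : Finset ι, 0 ≤ ∑ k ∈ s, (hi k - lo k) / 2 * |x k| := fun s =>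
    sum_nonneg fun k _ => mul_nonneg (by linarith [hlohi k]) (abs_nonneg _)
  have hdevF : ∀ {a a' : ι → ℝ}, (∀ k, q k → a k = a' k) → dev F a = dev F a' :=
    fun h => sum_congr rfl fun k hk => by rw [h k (mem_filter.mp hk).2]
  have hmid : (fun k => (lo k + hi k) / 2) ∈ Set.Icc lo hi :=
    ⟨fun k => by linarith [hlohi k], fun k => by linarith [hlohi k]⟩
  rw [hrhs, ← σ.forall_exists_holds_iff (hrad F) (hrad E)]
  constructor
  · intro h u hu
    obtain ⟨a', ha', -, hdev'⟩ := exists_mem_Icc_sum_sub_mid_mul_eq hlohi hmid F hu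
    obtain ⟨a, ha, hagree, hrel⟩ := h a' ha'
    refine ⟨dev E a, abs_sum_sub_mid_mul_le ha E, ?_⟩
    rwa [hsplit, hdevF hagree, show dev F a' = u from hdev'] at hrel
  · intro h a' ha'
    obtain ⟨w, hw, hrel⟩ := h (dev F a') (abs_sum_sub_mid_mul_le ha' F)
    obtain ⟨a, ha, hagree, hdev⟩ := exists_mem_Icc_sum_sub_mid_mul_eq hlohi ha' E hw
    have hagreeF : ∀ k, q k → a k = a' k := fun k hk => hagree k (by simp [E, hk])
    refine ⟨a, ha, hagreeF, ?_⟩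
    rwa [hsplit, hdevF hagreeF, show dev E a = w from hdev]

end Box

def IsRowAESol {ι : Type*} [Fintype ι] (lo hi : ι → ℝ) (blo bhi : ℝ) (q : ι → Bool) (qb : Bool)
    (rel : ℝ → ℝ → Prop) (x : ι → ℝ) : Prop :=
  ∀ a' ∈ Set.Icc lo hi, ∀ b' ∈ Set.Icc blo bhi, ∃ a ∈ Set.Icc lo hi, ∃ b ∈ Set.Icc blo bhi,
    (∀ j, q j → a j = a' j) ∧ (qb → b = b') ∧ rel (∑ j, a j * x j) b

theorem memIM_iff {m n : ℕ} {Alo Ahi A : Matrix (Fin m) (Fin n) ℝ} :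
    memIM Alo Ahi A ↔ ∀ i, A i ∈ Set.Icc (Alo i) (Ahi i) := by
  simp only [mem_Icc_iff_forall_mem_Icc]
  rfl

theorem aeSol_iff_forall_isRowAESol {m n : ℕ} {Alo Ahi : Matrix (Fin m) (Fin n) ℝ}
    {blo bhi : Fin m → ℝ} (hA : ∀ i j, Alo i j ≤ Ahi i j) (hb : ∀ i, blo i ≤ bhi i)
    (qA : Fin m → Fin n → Bool) (qb : Fin m → Bool) (rel : Fin m → ℝ → ℝ → Prop)
    (x : Fin n → ℝ) :
    AESol Alo Ahi blo bhi qA qb rel x ↔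
      ∀ i, IsRowAESol (Alo i) (Ahi i) (blo i) (bhi i) (qA i) (qb i) (rel i) x := by
  constructor
  · intro h i a' ha' b' hb'
    -- complete the row to universally chosen data by taking lower ends in the other rows
    have hA' : memIM Alo Ahi (Alo.updateRow i a') := memIM_iff.mpr fun k => by
      rcases eq_or_ne k i with rfl | hk
      · rwa [Matrix.updateRow_self]
      · rw [Matrix.updateRow_ne hk]
        exact ⟨le_rfl, fun j => hA k j⟩
    have hb' : memIV blo bhi (Function.update blo i b') := fun k => by
      rcases eq_or_ne k i with rfl | hk
      · simpa using hb'
      · simpa [hk] using hb k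
    obtain ⟨A, b, hAm, hbm, hAagree, hbagree, hrel⟩ := h _ _ hA' hb'
    exact ⟨A i, memIM_iff.mp hAm i, b i, hbm i, fun j hj => by simpa using hAagree i j hj,
      fun hi => by simpa using hbagree i hi, hrel i⟩
  · intro h A' b' hA' hb'
    choose a ha b hb hAagree hbagree hrel using
      fun i => h i (A' i) (memIM_iff.mp hA' i) (b' i) (hb' i)
    exact ⟨a, b, memIM_iff.mpr ha, hb, hAagree, hbagree, hrel⟩

section Augmented

variable {ι : Type*}

theorem mem_Icc_optionElim_iff {lo hi : ι → ℝ} {blo bhi : ℝ} {v : Option ι → ℝ} :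
    v ∈ Set.Icc (fun k : Option ι => k.elim blo lo) (fun k => k.elim bhi hi) ↔
      v none ∈ Set.Icc blo bhi ∧ (fun j => v (some j)) ∈ Set.Icc lo hi := by
  simp only [mem_Icc_iff_forall_mem_Icc (a := v), Option.forall, Option.elim_none,
    Option.elim_some, mem_Icc_iff_forall_mem_Icc (a := fun j => v (some j))]

variable [Fintype ι]

-- The right-hand side `b` becomes the extra coordinate `none`, with weight `-1`.

theorem isRowAESol_iff_augmented (lo hi x : ι → ℝ) (blo bhi : ℝ) (q : ι → Bool) (qb : Bool)
    (σ : IRel) :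
    IsRowAESol lo hi blo bhi q qb σ.holds x ↔
      ∀ v' ∈ Set.Icc (fun k : Option ι => k.elim blo lo) (fun k => k.elim bhi hi),
        ∃ v ∈ Set.Icc (fun k : Option ι => k.elim blo lo) (fun k => k.elim bhi hi),
          (∀ k : Option ι, k.elim qb q = true → v k = v' k) ∧
            σ.holds (∑ k : Option ι, v k * k.elim (-1) x) 0 := by
  have hsum : ∀ v : Option ι → ℝ, σ.holds (∑ j, v (some j) * x j) (v none) ↔
      σ.holds (∑ k : Option ι, v k * k.elim (-1) x) 0 := by
    intro v
    rw [σ.holds_iff_holds_sub, Fintype.sum_option]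
    simp only [Option.elim_none, Option.elim_some, mul_neg_one, neg_add_eq_sub]
  constructor
  · intro h v' hv'
    rw [mem_Icc_optionElim_iff] at hv'
    obtain ⟨a, ha, b, hb, hagree, hbagree, hrel⟩ := h _ hv'.2 _ hv'.1
    refine ⟨fun k => k.elim b a, mem_Icc_optionElim_iff.mpr ⟨hb, ha⟩, ?_, (hsum _).mp hrel⟩
    exact Option.forall.mpr ⟨hbagree, hagree⟩
  · intro h a' ha' b' hb'
    obtain ⟨v, hv, hagree, hrel⟩ :=
      h (fun k => k.elim b' a') (mem_Icc_optionElim_iff.mpr ⟨hb', ha'⟩)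
    obtain ⟨hbagree, hagree⟩ := Option.forall.mp hagree
    refine ⟨_, (mem_Icc_optionElim_iff.mp hv).2, _, (mem_Icc_optionElim_iff.mp hv).1,
      hagree, hbagree, (hsum v).mpr hrel⟩

theorem isRowAESol_holds_iff {lo hi : ι → ℝ} {blo bhi : ℝ} (hlohi : lo ≤ hi) (hb : blo ≤ bhi)
    (q : ι → Bool) (qb : Bool) (σ : IRel) (x : ι → ℝ) :
    IsRowAESol lo hi blo bhi q qb σ.holds x ↔
      σ.absr (∑ j, (lo j + hi j) / 2 * x j - (blo + bhi) / 2) ≤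
        (∑ j, (if q j then (-1 : ℝ) else 1) * ((hi j - lo j) / 2) * |x j|) +
          (if qb then (-1 : ℝ) else 1) * ((bhi - blo) / 2) := by
  rw [isRowAESol_iff_augmented, forall_exists_mem_Icc_holds_iff (Option.forall.mpr ⟨hb, hlohi⟩),
    Fintype.sum_option, Fintype.sum_option]
  simp only [Option.elim_none, Option.elim_some, mul_neg_one, neg_add_eq_sub, abs_neg, abs_one,
    mul_one]
  exact iff_of_eq (congrArg _ (add_comm _ _))

end Augmented

theorem stmt10 (m n : ℕ) (Alo Ahi : Matrix (Fin m) (Fin n) ℝ) (blo bhi : Fin m → ℝ)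
    (hA : ∀ i j, Alo i j ≤ Ahi i j) (hb : ∀ i, blo i ≤ bhi i)
    (qA : Fin m → Fin n → Bool) (qb : Fin m → Bool) (x : Fin n → ℝ)
    (σ : Fin m → IRel) :
    AESol Alo Ahi blo bhi qA qb (fun i a b => (σ i).holds a b) x ↔
    ∀ i,
      (σ i).absr (∑ j, ((Alo i j + Ahi i j) / 2) * x j - (blo i + bhi i) / 2) ≤
        (∑ j, (if qA i j then (-1 : ℝ) else 1) * ((Ahi i j - Alo i j) / 2) * |x j|) +
          (if qb i then (-1 : ℝ) else 1) * ((bhi i - blo i) / 2) := by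
  rw [aeSol_iff_forall_isRowAESol hA hb]
  exact forall_congr' fun i => isRowAESol_holds_iff (hA i) (hb i) (qA i) (qb i) (σ i) x
end

section
/- (Oettli–Prager characterization of weak solutions.) Let (Alo, Ahi) be an interval m×n matrix and (blo, bhi) an interval vector in ℝ^m. For every x ∈ ℝ^n: there exist a matrix A lying in the interval matrix and a vector b lying in the interval vector with Σ_j A_{ij} x_j = b_i for every i, if and only if for every row i, |Σ_j Ǎ_{ij} x_j − b̌_i| ≤ Σ_j Â_{ij} |x_j| + b̂_i. -/
open Finset

/-!
If `∑ⱼ aⱼ xⱼ = b`, then `∑ⱼ ǎⱼ xⱼ - b̌ = ∑ⱼ (ǎⱼ - aⱼ) xⱼ + (b - b̌)`, and the triangle inequality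
bounds the right side by `∑ⱼ âⱼ |xⱼ| + b̂`. Conversely, if the midpoint residual `c` and this radius
`r` satisfy `|c| ≤ r`, write `c = s r` with `|s| ≤ 1`; then `aⱼ = ǎⱼ - s sign(xⱼ) âⱼ` and
`b = b̌ + s b̂` lie in their intervals and solve the row exactly. The rows are independent, so the
solutions are chosen row by row.
-/

open Set

section IntervalArithmetic

variable {K : Type*} [Field K] [LinearOrder K] [IsStrictOrderedRing K]

theorem mem_Icc_iff_abs_sub_midpoint_le {lo hi a : K} :
    a ∈ Icc lo hi ↔ |a - (lo + hi) / 2| ≤ (hi - lo) / 2 := by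
  rw [abs_le, Set.mem_Icc]
  constructor <;> rintro ⟨h₁, h₂⟩ <;> constructor <;> linarith

theorem midpoint_add_mul_radius_mem_Icc {lo hi s : K} (h : lo ≤ hi) (hs : |s| ≤ 1) :
    (lo + hi) / 2 + s * ((hi - lo) / 2) ∈ Icc lo hi := by
  rw [mem_Icc_iff_abs_sub_midpoint_le, add_sub_cancel_left, abs_mul,
    abs_of_nonneg (by linarith : (0 : K) ≤ (hi - lo) / 2)]
  exact mul_le_of_le_one_left (by linarith) hs

theorem SignType.abs_coe_le_one (s : SignType) : |(s : K)| ≤ 1 := by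
  cases s <;> simp

theorem exists_abs_le_one_mul_eq {c r : K} (h : |c| ≤ r) : ∃ s : K, |s| ≤ 1 ∧ s * r = c := by
  refine ⟨c / r, ?_, ?_⟩
  · rw [abs_div]
    exact div_le_one_of_le₀ (h.trans (le_abs_self r)) (abs_nonneg r)
  · rcases eq_or_ne r 0 with hr | hr
    · simp [hr, abs_nonpos_iff.1 (hr ▸ h)]
    · exact div_mul_cancel₀ c hr

variable {ι : Type*} [Fintype ι]

theorem abs_sum_midpoint_mul_sub_midpoint_le {alo ahi a x : ι → K} {blo bhi b : K}
    (ha : ∀ j, a j ∈ Icc (alo j) (ahi j)) (hb : b ∈ Icc blo bhi) (hab : ∑ j, a j * x j = b) :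
    |∑ j, (alo j + ahi j) / 2 * x j - (blo + bhi) / 2| ≤
      ∑ j, (ahi j - alo j) / 2 * |x j| + (bhi - blo) / 2 := by
  have hsplit : ∑ j, (alo j + ahi j) / 2 * x j - (blo + bhi) / 2
      = ∑ j, ((alo j + ahi j) / 2 - a j) * x j + (b - (blo + bhi) / 2) := by
    simp only [sub_mul, sum_sub_distrib, hab]
    ring
  calc _ = |∑ j, ((alo j + ahi j) / 2 - a j) * x j + (b - (blo + bhi) / 2)| := by rw [hsplit]
    _ ≤ ∑ j, |((alo j + ahi j) / 2 - a j) * x j| + |b - (blo + bhi) / 2| :=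
        (abs_add_le _ _).trans (add_le_add_left (abs_sum_le_sum_abs _ _) _)
    _ ≤ _ := by
        gcongr with j
        · rw [abs_mul, abs_sub_comm]
          gcongr
          exact mem_Icc_iff_abs_sub_midpoint_le.1 (ha j)
        · exact mem_Icc_iff_abs_sub_midpoint_le.1 hb

theorem exists_mem_Icc_sum_mul_eq {alo ahi x : ι → K} {blo bhi : K}
    (hlo : ∀ j, alo j ≤ ahi j) (hb : blo ≤ bhi)
    (h : |∑ j, (alo j + ahi j) / 2 * x j - (blo + bhi) / 2| ≤
      ∑ j, (ahi j - alo j) / 2 * |x j| + (bhi - blo) / 2) :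
    ∃ a : ι → K, ∃ b, (∀ j, a j ∈ Icc (alo j) (ahi j)) ∧ b ∈ Icc blo bhi ∧
      ∑ j, a j * x j = b := by
  obtain ⟨s, hs, hsr⟩ := exists_abs_le_one_mul_eq h
  refine ⟨fun j => (alo j + ahi j) / 2 + -(s * SignType.sign (x j)) * ((ahi j - alo j) / 2),
    (blo + bhi) / 2 + s * ((bhi - blo) / 2),
    fun j => midpoint_add_mul_radius_mem_Icc (hlo j) ?_, midpoint_add_mul_radius_mem_Icc hb hs, ?_⟩
  · rw [abs_neg, abs_mul]
    exact mul_le_one₀ hs (abs_nonneg _) (SignType.abs_coe_le_one _)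
  · have hrow : ∀ j,
        ((alo j + ahi j) / 2 + -(s * SignType.sign (x j)) * ((ahi j - alo j) / 2)) * x j
          = (alo j + ahi j) / 2 * x j - s * ((ahi j - alo j) / 2 * |x j|) := fun j => by
      rw [← sign_mul_self (x j)]
      ring
    rw [sum_congr rfl fun j _ => hrow j, sum_sub_distrib, ← mul_sum]
    linear_combination -hsr

end IntervalArithmetic

theorem stmt13 (m n : ℕ) (Alo Ahi : Matrix (Fin m) (Fin n) ℝ) (blo bhi : Fin m → ℝ)
    (hA : ∀ i j, Alo i j ≤ Ahi i j) (hb : ∀ i, blo i ≤ bhi i)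
    (x : Fin n → ℝ) :
    (∃ A b, memIM Alo Ahi A ∧ memIV blo bhi b ∧ ∀ i, ∑ j, A i j * x j = b i) ↔
    ∀ i, |∑ j, ((Alo i j + Ahi i j) / 2) * x j - (blo i + bhi i) / 2| ≤ (∑ j, ((Ahi i j - Alo i j) / 2) * |x j|) + (bhi i - blo i) / 2 := by
  constructor
  · rintro ⟨A, b, hAmem, hbmem, hAb⟩ i
    exact abs_sum_midpoint_mul_sub_midpoint_le (hAmem i) (hbmem i) (hAb i)
  · intro h
    choose a b ha hbmem hab using fun i => exists_mem_Icc_sum_mul_eq (hA i) (hb i) (h i)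
    exact ⟨Matrix.of a, b, ha, hbmem, hab⟩
end

section
/- (Rohn's characterization of tolerable solutions.) Let (Alo, Ahi) be an interval m×n matrix and (blo, bhi) an interval vector in ℝ^m. For every x ∈ ℝ^n: for every matrix A lying in the interval matrix there exists a vector b lying in the interval vector with Σ_j A_{ij} x_j = b_i for every i, if and only if for every row i, |Σ_j Ǎ_{ij} x_j − b̌_i| ≤ b̂_i − Σ_j Â_{ij} |x_j|. -/
open Finset

/-! As `a` ranges over the box `lo ≤ a ≤ hi`, the value `∑ j, a j * x j` sweeps out exactly the
interval with centre `∑ j, (lo j + hi j) / 2 * x j` and radius `∑ j, (hi j - lo j) / 2 * |x j|`: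
the bound holds termwise, and its two ends are attained at the vertices that pick `hi j` or
`lo j` according to the sign of `x j`. So `x` is a tolerable solution iff, row by row, this interval lies in `[blo i, bhi i]`,
which is the stated inequality. -/

theorem abs_sub_mid_le_rad_sub_iff {c r lo hi : ℝ} :
    |c - (lo + hi) / 2| ≤ (hi - lo) / 2 - r ↔ lo ≤ c - r ∧ c + r ≤ hi := by
  rw [abs_le]
  constructor <;> rintro ⟨h₁, h₂⟩ <;> constructor <;> linarith

theorem memIM_of_forall_eq_or_eq {m n : ℕ} {Alo Ahi A : Matrix (Fin m) (Fin n) ℝ}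
    (hA : ∀ i j, Alo i j ≤ Ahi i j) (hvert : ∀ i j, A i j = Alo i j ∨ A i j = Ahi i j) :
    memIM Alo Ahi A := by
  intro i j
  rcases hvert i j with h | h <;> rw [h]
  · exact ⟨le_rfl, hA i j⟩
  · exact ⟨hA i j, le_rfl⟩

theorem ite_nonneg_mul_self_eq (lo hi t : ℝ) :
    (if 0 ≤ t then hi else lo) * t = (lo + hi) / 2 * t + (hi - lo) / 2 * |t| := by
  split_ifs with ht
  · rw [abs_of_nonneg ht]; ring
  · rw [abs_of_neg (not_le.1 ht)]; ring

section Row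

variable {ι : Type*} [Fintype ι]

theorem sum_ite_mul_eq (lo hi x : ι → ℝ) :
    ∑ j, (if 0 ≤ x j then hi j else lo j) * x j =
      ∑ j, (lo j + hi j) / 2 * x j + ∑ j, (hi j - lo j) / 2 * |x j| := by
  simp only [ite_nonneg_mul_self_eq, sum_add_distrib]

theorem sum_ite_swap_mul_eq (lo hi x : ι → ℝ) :
    ∑ j, (if 0 ≤ x j then lo j else hi j) * x j =
      ∑ j, (lo j + hi j) / 2 * x j - ∑ j, (hi j - lo j) / 2 * |x j| := by
  rw [sum_ite_mul_eq, sub_eq_add_neg, ← sum_neg_distrib]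
  congr 1 <;> exact sum_congr rfl fun j _ => by ring

theorem abs_sum_mul_sub_sum_mid_mul_le {lo hi a : ι → ℝ} (x : ι → ℝ)
    (ha : ∀ j, lo j ≤ a j ∧ a j ≤ hi j) :
    |∑ j, a j * x j - ∑ j, (lo j + hi j) / 2 * x j| ≤ ∑ j, (hi j - lo j) / 2 * |x j| := by
  rw [← sum_sub_distrib]
  refine (abs_sum_le_sum_abs _ _).trans (sum_le_sum fun j _ => ?_)
  rw [← sub_mul, abs_mul]
  gcongr
  obtain ⟨hlo, hhi⟩ := ha j
  exact abs_le.2 ⟨by linarith, by linarith⟩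

end Row

theorem stmt14_general (m n : ℕ) (Alo Ahi : Matrix (Fin m) (Fin n) ℝ) (blo bhi : Fin m → ℝ)
    (hA : ∀ i j, Alo i j ≤ Ahi i j)
    (x : Fin n → ℝ) :
    (∀ A, memIM Alo Ahi A →
      ∃ b, memIV blo bhi b ∧ ∀ i, ∑ j, A i j * x j = b i) ↔
    ∀ i, |∑ j, ((Alo i j + Ahi i j) / 2) * x j - (blo i + bhi i) / 2| ≤ (bhi i - blo i) / 2 - (∑ j, ((Ahi i j - Alo i j) / 2) * |x j|) := by
  simp_rw [abs_sub_mid_le_rad_sub_iff]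
  constructor
  · intro h i
    obtain ⟨bup, hbup, hup⟩ := h (fun i j => if 0 ≤ x j then Ahi i j else Alo i j)
      (memIM_of_forall_eq_or_eq hA fun _ _ => (ite_eq_or_eq _ _ _).symm)
    obtain ⟨blow, hblow, hlow⟩ := h (fun i j => if 0 ≤ x j then Alo i j else Ahi i j)
      (memIM_of_forall_eq_or_eq hA fun _ _ => ite_eq_or_eq _ _ _)
    rw [← sum_ite_swap_mul_eq (Alo i) (Ahi i) x, ← sum_ite_mul_eq (Alo i) (Ahi i) x, hlow i, hup i]
    exact ⟨(hblow i).1, (hbup i).2⟩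
  · intro h A hAmem
    refine ⟨fun i => ∑ j, A i j * x j, fun i => ?_, fun i => rfl⟩
    have hdev := abs_le.1 (abs_sum_mul_sub_sum_mid_mul_le x (hAmem i))
    constructor <;> linarith [h i]

theorem stmt14 (m n : ℕ) (Alo Ahi : Matrix (Fin m) (Fin n) ℝ) (blo bhi : Fin m → ℝ)
    (hA : ∀ i j, Alo i j ≤ Ahi i j) (hb : ∀ i, blo i ≤ bhi i)
    (x : Fin n → ℝ) :
    (∀ A, memIM Alo Ahi A →
      ∃ b, memIV blo bhi b ∧ ∀ i, ∑ j, A i j * x j = b i) ↔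
    ∀ i, |∑ j, ((Alo i j + Ahi i j) / 2) * x j - (blo i + bhi i) / 2| ≤ (bhi i - blo i) / 2 - (∑ j, ((Ahi i j - Alo i j) / 2) * |x j|) :=
  stmt14_general m n Alo Ahi blo bhi hA x
end

section
/- (Characterization of controllable solutions.) Let (Alo, Ahi) be an interval m×n matrix and (blo, bhi) an interval vector in ℝ^m. For every x ∈ ℝ^n: for every vector b lying in the interval vector there exists a matrix A lying in the interval matrix with Σ_j A_{ij} x_j = b_i for every i, if and only if for every row i, |Σ_j Ǎ_{ij} x_j − b̌_i| ≤ Σ_j Â_{ij} |x_j| − b̂_i. -/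
/-!
For a fixed `x`, the `i`-th entry of `A x` ranges, as `A` runs over the interval matrix, over
exactly `[Ǎᵢ x - Âᵢ |x|, Ǎᵢ x + Âᵢ |x|]`: the triangle inequality bounds it, the two ends are
attained by rows whose entries sit at `Ahi` or `Alo` according to the sign of `x j`, and the
image of a box under a linear map is convex. Since the rows of `A` can be chosen independently,
every `b` in the interval vector is reached iff each `[bloᵢ, bhiᵢ]` lies in that interval,
which is the stated inequality.
-/
open Finset

section Row

variable {ι : Type*} [Fintype ι] (lo hi x : ι → ℝ)

lemma abs_sum_mul_sub_sum_midpoint_mul_le {a : ι → ℝ} (ha : a ∈ Set.Icc lo hi) :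
    |∑ j, a j * x j - ∑ j, (lo j + hi j) / 2 * x j| ≤ ∑ j, (hi j - lo j) / 2 * |x j| := by
  rw [← sum_sub_distrib]
  refine (abs_sum_le_sum_abs _ _).trans (sum_le_sum fun j _ => ?_)
  rw [← sub_mul, abs_mul]
  gcongr
  rw [abs_le]
  constructor <;> linarith [ha.1 j, ha.2 j]

lemma sum_ite_nonneg_mul_eq_add :
    ∑ j, (if 0 ≤ x j then hi j else lo j) * x j =
      ∑ j, (lo j + hi j) / 2 * x j + ∑ j, (hi j - lo j) / 2 * |x j| := by
  rw [← sum_add_distrib]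
  refine sum_congr rfl fun j _ => ?_
  split_ifs with hx
  · rw [abs_of_nonneg hx]; ring
  · rw [abs_of_neg (not_le.1 hx)]; ring

lemma sum_ite_nonneg_mul_eq_sub :
    ∑ j, (if 0 ≤ x j then lo j else hi j) * x j =
      ∑ j, (lo j + hi j) / 2 * x j - ∑ j, (hi j - lo j) / 2 * |x j| := by
  rw [← sum_sub_distrib]
  refine sum_congr rfl fun j _ => ?_
  split_ifs with hx
  · rw [abs_of_nonneg hx]; ring
  · rw [abs_of_neg (not_le.1 hx)]; ring

theorem image_sum_mul_Icc (h : lo ≤ hi) :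
    (fun a => ∑ j, a j * x j) '' Set.Icc lo hi =
      Set.Icc (∑ j, (lo j + hi j) / 2 * x j - ∑ j, (hi j - lo j) / 2 * |x j|)
        (∑ j, (lo j + hi j) / 2 * x j + ∑ j, (hi j - lo j) / 2 * |x j|) := by
  refine subset_antisymm ?_ ?_
  · rintro _ ⟨a, ha, rfl⟩
    obtain ⟨h₁, h₂⟩ := abs_le.1 (abs_sum_mul_sub_sum_midpoint_mul_le lo hi x ha)
    constructor <;> linarith
  · have hconv : Convex ℝ ((fun a => ∑ j, a j * x j) '' Set.Icc lo hi) :=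
      (convex_Icc lo hi).is_linear_image
        ⟨fun a b => by simp only [Pi.add_apply, add_mul, sum_add_distrib],
          fun c a => by simp only [Pi.smul_apply, smul_eq_mul, mul_sum, mul_assoc]⟩
    have hcorner {p q : ι → ℝ} (hp : p ∈ Set.Icc lo hi) (hq : q ∈ Set.Icc lo hi) :
        (fun j => if 0 ≤ x j then p j else q j) ∈ Set.Icc lo hi := by
      constructor <;> intro j <;> dsimp only <;> split_ifs
      exacts [hp.1 j, hq.1 j, hp.2 j, hq.2 j]
    have hlo : lo ∈ Set.Icc lo hi := ⟨le_rfl, h⟩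
    have hhi : hi ∈ Set.Icc lo hi := ⟨h, le_rfl⟩
    rw [← sum_ite_nonneg_mul_eq_sub, ← sum_ite_nonneg_mul_eq_add]
    exact (convex_iff_ordConnected.1 hconv).out ⟨_, hcorner hlo hhi, rfl⟩ ⟨_, hcorner hhi hlo, rfl⟩

end Row

theorem stmt15 (m n : ℕ) (Alo Ahi : Matrix (Fin m) (Fin n) ℝ) (blo bhi : Fin m → ℝ)
    (hA : ∀ i j, Alo i j ≤ Ahi i j) (hb : ∀ i, blo i ≤ bhi i)
    (x : Fin n → ℝ) :
    (∀ b, memIV blo bhi b →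
      ∃ A, memIM Alo Ahi A ∧ ∀ i, ∑ j, A i j * x j = b i) ↔
    ∀ i, |∑ j, ((Alo i j + Ahi i j) / 2) * x j - (blo i + bhi i) / 2| ≤ (∑ j, ((Ahi i j - Alo i j) / 2) * |x j|) - (bhi i - blo i) / 2 := by
  have hsub : (∀ b, memIV blo bhi b → ∃ A, memIM Alo Ahi A ∧ ∀ i, ∑ j, A i j * x j = b i) ↔
      Set.univ.pi (fun i => Set.Icc (blo i) (bhi i)) ⊆
        Pi.map (fun _ a => ∑ j, a j * x j) '' Set.univ.pi (fun i => Set.Icc (Alo i) (Ahi i)) := by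
    simp only [Set.subset_def, Set.mem_image, Set.mem_univ_pi, Set.mem_Icc, memIV, memIM,
      funext_iff, Pi.map_apply, Pi.le_def, forall_and]
    exact Iff.rfl
  rw [hsub, Set.piMap_image_univ_pi, Set.pi_subset_pi_iff,
    or_iff_left (Set.univ_pi_nonempty_iff.2 fun i => Set.nonempty_Icc.2 (hb i)).ne_empty]
  refine forall_congr' fun i => ?_
  rw [imp_iff_right (Set.mem_univ i), image_sum_mul_Icc _ _ _ fun j => hA i j,
    Set.Icc_subset_Icc_iff (hb i), abs_le]
  constructor <;> rintro ⟨h₁, h₂⟩ <;> constructor <;> linarith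
end
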